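/- arXiv:0912.1361 — 12 statements merged into one kernel-verified Lean document; each statement's English description precedes it below -/
import Mathlib

section
/- For every n ≥ 0: (i) every permutation of {1,…,n} avoiding the generalized pattern 3̂2̂1 (i.e., having no pair of indices i, j with i+1 < j and π_i > π_{i+1} > π_j) is simsun, and (ii) every simsun permutation of {1,…,n} has no double descent, i.e., no index i with π_i > π_{i+1} > π_{i+2}. -/
/-- `π` is simsun: for every `k`, the subword of the one-line notation of `π`
consisting of the `k` smallest entries (i.e. the values `< k`, in 0-based form)
contains no three consecutive decreasing elements.  Here "three consecutive
decreasing elements of the subword" means positions `a < b < c` whose values are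
all `< k`, with no position carrying a value `< k` strictly between `a` and `b`
nor strictly between `b` and `c`, and with `π a > π b > π c`. -/
def IsSimsun {n : ℕ} (π : Equiv.Perm (Fin n)) : Prop :=
  ∀ k : ℕ, ¬ ∃ a b c : Fin n, a < b ∧ b < c ∧
    (π a : ℕ) < k ∧ (π b : ℕ) < k ∧ (π c : ℕ) < k ∧
    (∀ m : Fin n, a < m → m < b → k ≤ (π m : ℕ)) ∧
    (∀ m : Fin n, b < m → m < c → k ≤ (π m : ℕ)) ∧
    (π c : ℕ) < (π b : ℕ) ∧ (π b : ℕ) < (π a : ℕ)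

/-- `π` contains the generalized pattern 3̂2̂1 (first two entries adjacent):
there are indices `i`, `j` with `i + 1 < j` and `π i > π (i+1) > π j`. -/
def Contains32hat1 {n : ℕ} (π : Equiv.Perm (Fin n)) : Prop :=
  ∃ (i j : ℕ) (hj : j < n) (_ : i + 1 < j),
    π ⟨j, hj⟩ < π ⟨i + 1, by omega⟩ ∧ π ⟨i + 1, by omega⟩ < π ⟨i, by omega⟩

/-- `π` has a double descent: an index `i` with `π i > π (i+1) > π (i+2)`,
i.e. an occurrence of the generalized pattern 3̂2̂1̂. -/
def HasDoubleDescent {n : ℕ} (π : Equiv.Perm (Fin n)) : Prop :=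
  ∃ (i : ℕ) (h : i + 2 < n),
    π ⟨i + 2, h⟩ < π ⟨i + 1, by omega⟩ ∧ π ⟨i + 1, by omega⟩ < π ⟨i, by omega⟩

/-!
For (i): if `a < b < c` is a double descent of the subword of entries `< k`, then the entry
just before position `b` is either `π a` itself or a skipped entry, which is `≥ k`; in both
cases it exceeds `π b`, so together with `π c` it gives an occurrence of 3̂2̂1.
For (ii): a double descent of `π` is a double descent of the whole word, the subword for `k = n`.
-/

variable {n : ℕ} {π : Equiv.Perm (Fin n)}

theorem contains32hat1_of_succ_eq {p b c : Fin n} (hpb : (p : ℕ) + 1 = b) (hbc : b < c)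
    (hcb : π c < π b) (hbp : π b < π p) : Contains32hat1 π := by
  obtain ⟨p, hp⟩ := p
  obtain ⟨b, hb⟩ := b
  subst hpb
  exact ⟨p, c, c.isLt, hbc, hcb, hbp⟩

theorem isSimsun_of_not_contains32hat1 (h : ¬ Contains32hat1 π) : IsSimsun π := by
  rintro k ⟨a, b, c, hab, hbc, -, hbk, -, hgap, -, hcb, hba⟩
  have hab' : (a : ℕ) < b := hab
  let p : Fin n := ⟨b - 1, by omega⟩
  have hbp : π b < π p := by
    rcases eq_or_lt_of_le (show a ≤ p from Fin.le_def.mpr (show (a : ℕ) ≤ b - 1 by omega)) with hap | hap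
    · exact hap ▸ hba
    · exact Fin.lt_def.mpr (hbk.trans_le (hgap p hap (Fin.lt_def.mpr (show b - 1 < (b : ℕ) by omega))))
  exact h (contains32hat1_of_succ_eq (show (b : ℕ) - 1 + 1 = b by omega) hbc hcb hbp)

theorem not_hasDoubleDescent_of_isSimsun (h : IsSimsun π) : ¬ HasDoubleDescent π := by
  rintro ⟨i, hi, hdesc₂, hdesc₁⟩
  refine h n ⟨⟨i, by omega⟩, ⟨i + 1, by omega⟩, ⟨i + 2, hi⟩, Fin.mk_lt_mk.mpr (by omega),
    Fin.mk_lt_mk.mpr (by omega), (π _).isLt, (π _).isLt, (π _).isLt, ?_, ?_, hdesc₂, hdesc₁⟩ <;>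
  · intro m hm₁ hm₂
    rw [Fin.lt_def] at hm₁ hm₂
    simp only at hm₁ hm₂
    omega

/-- (i) Every permutation avoiding the generalized pattern 3̂2̂1 is simsun, and
(ii) every simsun permutation has no double descent. -/
theorem avoids32hat1_imp_simsun_and_simsun_imp_noDoubleDescent
    (n : ℕ) (π : Equiv.Perm (Fin n)) :
    (¬ Contains32hat1 π → IsSimsun π) ∧ (IsSimsun π → ¬ HasDoubleDescent π) :=
  ⟨isSimsun_of_not_contains32hat1, not_hasDoubleDescent_of_isSimsun⟩
end

section
/- Let π be a permutation of {1,…,n} avoiding the pattern 132, and let l_1 > l_2 > ⋯ > l_r be its left-to-right minima. Then π is simsun if and only if (a) π has no double descent, i.e., no index i with π_i > π_{i+1} > π_{i+2}, and (b) l_{j-1} − l_j ≥ 2 for all j with 2 ≤ j ≤ r−1. -/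
/-- `π` contains the pattern 132. -/
def Contains132 {n : ℕ} (π : Equiv.Perm (Fin n)) : Prop :=
  ∃ a b c : Fin n, a < b ∧ b < c ∧ π a < π c ∧ π c < π b

/-- `π i` is a left-to-right minimum of `π`: it is smaller than every entry to
its left. -/
def IsLRMin {n : ℕ} (π : Equiv.Perm (Fin n)) (i : Fin n) : Prop :=
  ∀ j : Fin n, j < i → π i < π j

/-!
A double descent of `π` is already one of the full subword. If a nonzero left-to-right
minimum `π i'` has `π i' + 1` to its left, the entries `< π i' + 2` contain the consecutive
run `π i' + 1, π i', v`, where `v` is the first later entry below `π i'`.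

Conversely, let `π a > π b > π c` be consecutive in the subword of entries `< k`. Avoiding
132 makes `b` a left-to-right minimum, and by (b) its predecessor among the left-to-right
minima is at least `π b + 2`, so the value `π b + 1` sits to the right of `c`. The entries
strictly between `b` and `c` exceed it, so avoiding 132 forces `c = b + 1`, and positions
`b - 1, b, b + 1` form a double descent.
-/

section

variable {n : ℕ} {π : Equiv.Perm (Fin n)}

theorem hasDoubleDescent_iff : HasDoubleDescent π ↔
    ∃ x y z : Fin n, (y : ℕ) = x + 1 ∧ (z : ℕ) = y + 1 ∧ π z < π y ∧ π y < π x := by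
  constructor
  · rintro ⟨i, _, hzy, hyx⟩
    exact ⟨_, _, _, rfl, rfl, hzy, hyx⟩
  · rintro ⟨x, ⟨_, _⟩, ⟨_, hz⟩, rfl, rfl, hzy, hyx⟩
    exact ⟨x, hz, hzy, hyx⟩

theorem IsSimsun.not_hasDoubleDescent (hπ : IsSimsun π) : ¬ HasDoubleDescent π := by
  rw [hasDoubleDescent_iff]
  rintro ⟨x, y, z, hy, hz, hzy, hyx⟩
  exact hπ n ⟨x, y, z, by omega, by omega, by omega, by omega, by omega,
    fun m _ _ => by omega, fun m _ _ => by omega, hzy, hyx⟩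

theorem IsSimsun.apply_ne_add_one (hπ : IsSimsun π) {i i' : Fin n} (hii' : i < i')
    (hi' : IsLRMin π i') (h0 : (π i' : ℕ) ≠ 0) : (π i : ℕ) ≠ π i' + 1 := by
  intro hi
  obtain ⟨r, hr⟩ : ∃ r, (π r : ℕ) = π i' - 1 := ⟨π.symm ⟨π i' - 1, by omega⟩, by simp⟩
  have hi'r : i' < r := by
    rcases lt_trichotomy r i' with hri' | rfl | hi'r
    · have := hi' r hri'
      omega
    · omega
    · exact hi'r
  obtain ⟨p, ⟨hi'p, hp⟩, hfirst⟩ := wellFounded_lt.has_min {m | i' < m ∧ π m < π i'}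
    ⟨r, hi'r, by omega⟩
  refine hπ (π i' + 2) ⟨i, i', p, hii', hi'p, by omega, by omega, by omega,
    fun m him hmi' => ?_, fun m hi'm hmp => ?_, by omega, by omega⟩
  · have := hi' m hmi'
    have : π m ≠ π i := π.injective.ne him.ne'
    omega
  · have : ¬ (i' < m ∧ π m < π i') := fun h => hfirst m h hmp
    have : π m ≠ π i := π.injective.ne (hii'.trans hi'm).ne'
    have : π m ≠ π i' := π.injective.ne hi'm.ne'
    omega

theorem exists_isLRMin_forall_le {a b : Fin n} (hab : a < b) :
    ∃ a' < b, IsLRMin π a' ∧ ∀ j < b, π a' ≤ π j := by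
  obtain ⟨a', ha', hmin⟩ := (Finset.univ.filter (· < b)).exists_min_image π ⟨a, by simp [hab]⟩
  simp only [Finset.mem_filter, Finset.mem_univ, true_and] at ha' hmin
  refine ⟨a', ha', fun j hja => ?_, hmin⟩
  exact lt_of_le_of_ne (hmin j (hja.trans ha')) (π.injective.ne hja.ne')

variable (h132 : ¬ Contains132 π)
include h132

theorem isLRMin_of_avoids132 {a b : Fin n} (hab : a < b) (hba : π b < π a)
    (hbetween : ∀ m, a < m → m < b → π b < π m) : IsLRMin π b := by
  intro j hjb
  rcases lt_trichotomy j a with hja | rfl | haj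
  · refine lt_of_not_ge fun hjb' => h132 ⟨j, a, b, hja, hab, ?_, hba⟩
    exact lt_of_le_of_ne hjb' (π.injective.ne hjb.ne)
  · exact hba
  · exact hbetween j haj hjb

theorem val_eq_add_one_of_avoids132 {b c p : Fin n} (hbc : b < c) (hcp : c < p)
    (hbp : π b < π p) (hbetween : ∀ m, b < m → m < c → π p < π m) : (c : ℕ) = b + 1 := by
  by_contra hne
  let m : Fin n := ⟨b + 1, by omega⟩
  exact h132 ⟨b, m, p, Fin.lt_def.2 (by simp [m]), by simp [Fin.lt_def, m]; omega, hbp,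
    hbetween m (Fin.lt_def.2 (by simp [m])) (by simp [Fin.lt_def, m]; omega)⟩

theorem isSimsun_of_avoids132 (hdd : ¬ HasDoubleDescent π)
    (hgap : ∀ i i' : Fin n, IsLRMin π i → IsLRMin π i' → i < i' →
      (∀ m : Fin n, i < m → m < i' → ¬ IsLRMin π m) →
      (π i' : ℕ) ≠ 0 → (π i' : ℕ) + 2 ≤ (π i : ℕ)) :
    IsSimsun π := by
  rintro k ⟨a, b, c, hab, hbc, hak, -, -, hab_above, hbc_above, hcb, hba⟩
  have hb : IsLRMin π b := isLRMin_of_avoids132 h132 hab hba fun m ham hmb => by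
    have := hab_above m ham hmb
    omega
  obtain ⟨a', ha'b, ha', ha'_le⟩ := exists_isLRMin_forall_le hab
  have hgap_b := hgap a' b ha' hb ha'b
    (fun m ha'm hmb hm => (hm a' ha'm).not_ge (ha'_le m hmb)) (by omega)
  have ha'a := ha'_le a hab
  obtain ⟨p, hp⟩ : ∃ p, (π p : ℕ) = π b + 1 := ⟨π.symm ⟨π b + 1, by omega⟩, by simp⟩
  have hcp : c < p := by
    by_contra! hpc
    rcases lt_trichotomy p b with hpb | rfl | hbp
    · have := ha'_le p hpb
      omega
    · omega
    · rcases hpc.lt_or_eq with hpc | rfl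
      · have := hbc_above p hbp hpc
        omega
      · omega
  have hc : (c : ℕ) = b + 1 := val_eq_add_one_of_avoids132 h132 hbc hcp (by omega)
    fun m hbm hmc => by
      have := hbc_above m hbm hmc
      omega
  obtain ⟨b', hb'⟩ : ∃ b' : Fin n, (b : ℕ) = b' + 1 := ⟨⟨b - 1, by omega⟩, by simp; omega⟩
  refine hdd (hasDoubleDescent_iff.2 ⟨b', b, c, hb', hc, hcb, ?_⟩)
  rcases (show a ≤ b' by omega).lt_or_eq with hab' | rfl
  · have := hab_above b' hab' (by omega)
    omega
  · exact hba

end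

/-- A 132-avoiding permutation `π` is simsun if and only if (a) it has no double
descent, and (b) any two consecutive left-to-right minima `l_{j-1} > l_j` of `π`
with `l_j` not the last (smallest) left-to-right minimum satisfy
`l_{j-1} - l_j ≥ 2`. -/
theorem simsun_iff_of_avoids132 (n : ℕ) (π : Equiv.Perm (Fin n))
    (h132 : ¬ Contains132 π) :
    IsSimsun π ↔
      (¬ HasDoubleDescent π ∧
        ∀ i i' : Fin n, IsLRMin π i → IsLRMin π i' → i < i' →
          (∀ m : Fin n, i < m → m < i' → ¬ IsLRMin π m) →
          (π i' : ℕ) ≠ 0 → (π i' : ℕ) + 2 ≤ (π i : ℕ)) := by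
  constructor
  · intro hπ
    refine ⟨hπ.not_hasDoubleDescent, fun i i' _ hi' hii' _ h0 => ?_⟩
    have := hi' i hii'
    have := hπ.apply_ne_add_one hii' hi' h0
    omega
  · rintro ⟨hdd, hgap⟩
    exact isSimsun_of_avoids132 h132 hdd hgap
end

section
/- For every n ≥ 0, the number of Dyck paths of semilength n containing no three consecutive U steps and no three consecutive D steps equals the secondary structure number S_n. -/
/-- The secondary structure numbers: `S 0 = S 1 = 1` and, for `n ≥ 2`,
`S n = S (n-1) + S (n-2) + ∑_{k=0}^{n-3} S k * S (n-3-k)`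
(the sum being empty for `n = 2`). -/
def secStruct : ℕ → ℕ
  | 0 => 1
  | 1 => 1
  | n + 2 => secStruct (n + 1) + secStruct n +
      ∑ k ∈ (Finset.range n).attach, secStruct k * secStruct (n - 1 - k)
decreasing_by
  all_goals first
    | omega
    | (have := Finset.mem_range.mp k.2; omega)

/-- A Dyck word over `Bool`, where `true` stands for the step `U` and `false`
for the step `D`: equally many `U`s and `D`s, and every prefix has at least as
many `U`s as `D`s. -/
def IsDyckWord (w : List Bool) : Prop :=
  w.count true = w.count false ∧
    ∀ p : List Bool, p <+: w → p.count false ≤ p.count true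

/-!
Cutting a Dyck word at its first return to the axis writes it uniquely as `U v D b` with `v`
and `b` Dyck words. Since `b` does not start with `D`, the word avoids `UUU` and `DDD` iff `b`
and the block `U v D` do. The block avoids them iff `v` is empty, `UD`, or `UD y UD` with `y` avoiding
them: `v` can neither start with `UU` nor end with `DD`. For semilength `n + 2` the three shapes
give the three summands `S (n + 1)`, `S n` and `∑ S k * S (n - 1 - k)` of the recursion.
-/

open List

theorem isDyckWord_iff_take {w : List Bool} : IsDyckWord w ↔ w.count true = w.count false ∧
    ∀ i, (w.take i).count false ≤ (w.take i).count true :=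
  and_congr_right fun _ =>
    ⟨fun h i => h _ (take_prefix i w), fun h _ hp => prefix_iff_eq_take.mp hp ▸ h _⟩

namespace IsDyckWord

variable {t u v v' w b b' : List Bool}

theorem nil : IsDyckWord [] := by simp [isDyckWord_iff_take]

theorem length_eq (h : IsDyckWord w) : w.length = 2 * w.count true := by
  have := count_true_add_count_false w
  have := h.1
  omega

theorem append (hu : IsDyckWord u) (hv : IsDyckWord v) : IsDyckWord (u ++ v) := by
  rw [isDyckWord_iff_take] at *
  refine ⟨by simp [hu.1, hv.1], fun i => ?_⟩
  rw [take_append, count_append, count_append]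
  rcases le_or_gt i u.length with hi | hi
  · simpa [Nat.sub_eq_zero_of_le hi] using hu.2 i
  · rw [take_of_length_le hi.le]
    have := hu.1
    have := hv.2 (i - u.length)
    omega

theorem nest (hv : IsDyckWord v) : IsDyckWord (true :: v ++ [false]) := by
  refine ⟨by simp [hv.1], fun p hp => ?_⟩
  rcases prefix_cons_iff.mp hp with rfl | ⟨q, rfl, hq⟩
  · simp
  rcases prefix_concat_iff.mp hq with rfl | hq
  · simp [hv.1]
  · simpa using (hv.2 q hq).trans (Nat.le_succ _)

theorem left_of_append (h : IsDyckWord (u ++ v)) (hv : IsDyckWord v) : IsDyckWord u := by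
  refine ⟨?_, fun p hp => h.2 p (hp.trans (prefix_append u v))⟩
  have := h.1
  have := hv.1
  simp only [count_append] at *
  omega

theorem right_of_append (h : IsDyckWord (u ++ v)) (hu : IsDyckWord u) : IsDyckWord v := by
  rw [isDyckWord_iff_take] at *
  refine ⟨by have := h.1; have := hu.1; simp only [count_append] at *; omega, fun i => ?_⟩
  have := h.2 (u.length + i)
  rw [take_append, take_of_length_le (by omega), count_append, count_append,
    Nat.add_sub_cancel_left] at this
  have := hu.1
  omega

theorem head?_ne_false (h : IsDyckWord w) : w.head? ≠ some false := fun hw => by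
  simpa using h.2 [false] (singleton_prefix_iff_head?_eq_some.mpr hw)

theorem getLast?_ne_true (h : IsDyckWord w) : w.getLast? ≠ some true := fun hw => by
  obtain ⟨s, rfl⟩ := getLast?_eq_some_iff.mp hw
  have hs := h.2 s (prefix_append s _)
  have hc := h.1
  simp at hc
  omega

theorem not_append_false_cons (hv : IsDyckWord v) : ¬ IsDyckWord (v ++ false :: b) := fun h => by
  have hp := h.2 (v ++ [false]) (by simp)
  have hc := hv.1
  simp at hp
  omega

theorem firstReturn_unique (hv : IsDyckWord v) (hv' : IsDyckWord v')
    (h : v ++ false :: b = v' ++ false :: b') : v = v' ∧ b = b' := by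
  rcases append_eq_append_iff.mp h with ⟨_ | ⟨x, a⟩, rfl, ha⟩ | ⟨_ | ⟨x, c⟩, rfl, hc⟩
  · simp_all
  · obtain ⟨rfl, rfl⟩ := cons.inj ha
    exact absurd hv' hv.not_append_false_cons
  · simp_all
  · obtain ⟨rfl, rfl⟩ := cons.inj hc
    exact absurd hv hv'.not_append_false_cons

theorem exists_firstReturn (h : IsDyckWord (true :: t)) :
    ∃ v b, IsDyckWord v ∧ IsDyckWord b ∧ t = v ++ false :: b := by
  -- the first return to the axis ends the shortest prefix of `t` with one `D` in excess
  have hex : ∃ i, (t.take i).count false = (t.take i).count true + 1 :=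
    ⟨t.length, by simpa [count_cons, eq_comm] using h.1⟩
  have hmin : ∀ j < Nat.find hex, (t.take j).count false ≤ (t.take j).count true := fun j hj => by
    have hne := Nat.find_min hex hj
    have hle : (t.take j).count false ≤ (t.take j).count true + 1 := by
      simpa [count_cons] using h.2 (true :: t.take j) (by simp [take_prefix])
    omega
  obtain ⟨j, hj⟩ : ∃ j, Nat.find hex = j + 1 :=
    Nat.exists_eq_succ_of_ne_zero fun h0 => by simpa [h0] using Nat.find_spec hex
  have hspec := Nat.find_spec hex
  have hlt : j < t.length := by
    by_contra hle
    have := hmin j (by omega)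
    rw [hj, take_of_length_le (by omega)] at hspec
    rw [take_of_length_le (by omega)] at this
    omega
  rw [hj, take_add_one, getElem?_eq_getElem hlt] at hspec
  have hfalse : t[j] = false := by
    have := hmin j (by omega)
    cases htj : t[j] <;> simp_all
  have hv : IsDyckWord (t.take j) := by
    rw [isDyckWord_iff_take]
    refine ⟨by simp [hfalse] at hspec; omega, fun i => ?_⟩
    rw [take_take]
    exact hmin _ (by omega)
  have ht : t = t.take j ++ false :: t.drop (j + 1) := by
    rw [← hfalse, ← drop_eq_getElem_cons hlt, take_append_drop]
  refine ⟨_, _, hv, right_of_append (u := true :: t.take j ++ [false]) ?_ hv.nest, ht⟩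
  rw [ht] at h
  simpa using h

end IsDyckWord

theorem List.replicate_infix_append {α : Type*} {a : α} {n : ℕ} {x y : List α}
    (hxy : x.getLast? ≠ y.head?) (h : replicate n a <:+: x ++ y) :
    replicate n a <:+: x ∨ replicate n a <:+: y := by
  rcases infix_append_iff_ne_nil.mp h with h | h | ⟨l₁, l₂, h₁, h₂, hl, ⟨s, rfl⟩, ⟨t, rfl⟩⟩
  · exact .inl h
  · exact .inr h
  · obtain ⟨-, e₁, e₂⟩ := append_eq_replicate_iff.mp hl.symm
    refine absurd ?_ hxy
    rw [e₁, e₂] at *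
    simp_all [getLast?_append, head?_append, getLast?_replicate, head?_replicate]

def NoTripleRun (w : List Bool) : Prop :=
  ∀ c, ¬ replicate 3 c <:+: w

theorem noTripleRun_iff {w : List Bool} :
    NoTripleRun w ↔ ¬ [true, true, true] <:+: w ∧ ¬ [false, false, false] <:+: w :=
  Bool.forall_bool.trans and_comm

namespace NoTripleRun

variable {v w x y : List Bool}

theorem mono (h : NoTripleRun w) (hv : v <:+: w) : NoTripleRun v :=
  fun c hc => h c (hc.trans hv)

theorem append (hx : NoTripleRun x) (hy : NoTripleRun y) (hxy : x.getLast? ≠ y.head?) :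
    NoTripleRun (x ++ y) :=
  fun c hc => (replicate_infix_append hxy hc).elim (hx c) (hy c)

end NoTripleRun

section
variable {v b : List Bool}

theorem noTripleRun_nest_append_iff (hb : IsDyckWord b) :
    NoTripleRun (true :: v ++ false :: b) ↔
      NoTripleRun (true :: v ++ [false]) ∧ NoTripleRun b := by
  rw [show true :: v ++ false :: b = (true :: v ++ [false]) ++ b by simp]
  refine ⟨fun h => ⟨h.mono infix_append_left, h.mono infix_append_right⟩,
    fun ⟨hl, hr⟩ => hl.append hr ?_⟩
  simpa [getLast?_cons] using hb.head?_ne_false.symm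

theorem noTripleRun_nest_iff (hv : IsDyckWord v) :
    NoTripleRun (true :: v ++ [false]) ↔ v = [] ∨ v = [true, false] ∨
      ∃ y, IsDyckWord y ∧ NoTripleRun y ∧ v = [true, false] ++ y ++ [true, false] := by
  constructor
  · intro h
    rcases v with _ | ⟨_ | _, v⟩
    · exact .inl rfl
    · exact absurd rfl hv.head?_ne_false
    rcases v with _ | ⟨_ | _, v⟩
    · simp [IsDyckWord] at hv
    swap
    · exact absurd ⟨[], _, rfl⟩ (h true)
    have hv₂ : IsDyckWord v := hv.right_of_append (u := [true, false]) IsDyckWord.nil.nest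
    rcases eq_nil_or_concat' v with rfl | ⟨s, _ | _, rfl⟩
    · exact .inr (.inl rfl)
    swap
    · exact absurd (by simp) hv₂.getLast?_ne_true
    rcases eq_nil_or_concat' s with rfl | ⟨y, _ | _, rfl⟩
    · exact absurd rfl hv₂.head?_ne_false
    · exact absurd ⟨[true, true, false] ++ y, [], by simp⟩ (h false)
    have hy : IsDyckWord y := IsDyckWord.left_of_append (by simpa using hv₂) IsDyckWord.nil.nest
    exact .inr (.inr ⟨y, hy, h.mono ⟨[true, true, false], [true, false, false], by simp⟩, by simp⟩)
  · rintro (rfl | rfl | ⟨y, hy, hny, rfl⟩)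
    · unfold NoTripleRun; decide
    · unfold NoTripleRun; decide
    rw [show true :: ([true, false] ++ y ++ [true, false]) ++ [false] =
      [true, true, false] ++ (y ++ [true, false, false]) by simp]
    refine NoTripleRun.append (by unfold NoTripleRun; decide)
      (hny.append (by unfold NoTripleRun; decide) ?_) ?_
    · simpa using hy.getLast?_ne_true
    · cases hh : y.head? with
      | none => simp [hh]
      | some c => cases c <;> simp_all [hy.head?_ne_false]
end

def DyckNoTriple (n : ℕ) : Type :=
  {w : List Bool // w.length = 2 * n ∧ IsDyckWord w ∧ NoTripleRun w}

instance (n : ℕ) : Finite (DyckNoTriple n) :=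
  ((List.finite_length_eq Bool (2 * n)).subset fun _ hw => hw.1).to_subtype

namespace DyckNoTriple

/-- The three shapes of the first-return block `U v D` of a word in `DyckNoTriple (n + 2)`:
`v` empty, `v = UD`, or `v = UD y UD`; the factors are `y` and the word after the block. -/
abbrev Summands (n : ℕ) : Type :=
  DyckNoTriple (n + 1) ⊕ DyckNoTriple n ⊕ Σ k : Fin n, DyckNoTriple k × DyckNoTriple (n - 1 - k)

variable {n : ℕ}

def insidePart : Summands n → List Bool
  | .inl _ => []
  | .inr (.inl _) => [true, false]
  | .inr (.inr ⟨_, y, _⟩) => [true, false] ++ y.1 ++ [true, false]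

def outsidePart : Summands n → List Bool
  | .inl b => b.1
  | .inr (.inl b) => b.1
  | .inr (.inr ⟨_, _, b⟩) => b.1

theorem isDyckWord_insidePart (z : Summands n) : IsDyckWord (insidePart z) := by
  rcases z with _ | _ | ⟨_, y, _⟩
  · exact .nil
  · exact IsDyckWord.nil.nest
  · exact (IsDyckWord.nil.nest.append y.2.2.1).append IsDyckWord.nil.nest

theorem insidePart_shape (z : Summands n) : insidePart z = [] ∨ insidePart z = [true, false] ∨
    ∃ y, IsDyckWord y ∧ NoTripleRun y ∧ insidePart z = [true, false] ++ y ++ [true, false] := by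
  rcases z with _ | _ | ⟨_, ⟨y, _, hy, hny⟩, _⟩
  · exact .inl rfl
  · exact .inr (.inl rfl)
  · exact .inr (.inr ⟨y, hy, hny, rfl⟩)

theorem isDyckWord_outsidePart (z : Summands n) : IsDyckWord (outsidePart z) := by
  rcases z with ⟨_, _, hb, _⟩ | ⟨_, _, hb, _⟩ | ⟨_, _, _, _, hb, _⟩ <;> exact hb

theorem noTripleRun_outsidePart (z : Summands n) : NoTripleRun (outsidePart z) := by
  rcases z with ⟨_, _, _, hb⟩ | ⟨_, _, _, hb⟩ | ⟨_, _, _, _, _, hb⟩ <;> exact hb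

theorem length_insidePart_add_length_outsidePart (z : Summands n) :
    (insidePart z).length + (outsidePart z).length = 2 * n + 2 := by
  rcases z with ⟨_, hb, _⟩ | ⟨_, hb, _⟩ | ⟨k, ⟨_, hy, _⟩, ⟨_, hb, _⟩⟩
  · simp [insidePart, outsidePart, hb]; omega
  · simp [insidePart, outsidePart, hb]; omega
  · simp [insidePart, outsidePart, hb, hy]; omega

theorem glue_spec (z : Summands n) :
    (true :: insidePart z ++ false :: outsidePart z).length = 2 * (n + 2) ∧
      IsDyckWord (true :: insidePart z ++ false :: outsidePart z) ∧
      NoTripleRun (true :: insidePart z ++ false :: outsidePart z) := by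
  have hb := isDyckWord_outsidePart z
  refine ⟨?_, by simpa using (isDyckWord_insidePart z).nest.append hb, ?_⟩
  · have := length_insidePart_add_length_outsidePart z
    simp
    omega
  · rw [noTripleRun_nest_append_iff hb, noTripleRun_nest_iff (isDyckWord_insidePart z)]
    exact ⟨insidePart_shape z, noTripleRun_outsidePart z⟩

def glue (z : Summands n) : DyckNoTriple (n + 2) :=
  ⟨true :: insidePart z ++ false :: outsidePart z, glue_spec z⟩

theorem insidePart_outsidePart_injective {z z' : Summands n} (hi : insidePart z = insidePart z')
    (ho : outsidePart z = outsidePart z') : z = z' := by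
  rcases z with ⟨b, hb⟩ | ⟨b, hb⟩ | ⟨k, ⟨y, hy⟩, ⟨b, hb⟩⟩ <;>
    rcases z' with ⟨b', hb'⟩ | ⟨b', hb'⟩ | ⟨k', ⟨y', hy'⟩, ⟨b', hb'⟩⟩ <;>
    simp [insidePart, outsidePart] at hi ho ⊢
  · subst ho; rfl
  · subst ho; rfl
  · subst hi ho
    obtain rfl : k = k' := Fin.ext (by omega)
    simp

theorem glue_injective : Function.Injective (glue (n := n)) := fun z z' h => by
  have hval := (cons.inj (congrArg Subtype.val h)).2
  obtain ⟨hi, ho⟩ := (isDyckWord_insidePart z).firstReturn_unique (isDyckWord_insidePart z') hval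
  exact insidePart_outsidePart_injective hi ho

theorem glue_surjective : Function.Surjective (glue (n := n)) := by
  rintro ⟨w, hlen, hw, hnw⟩
  obtain ⟨t, rfl⟩ : ∃ t, w = true :: t := by
    rcases w with _ | ⟨_ | _, t⟩
    · simp at hlen
    · exact absurd rfl hw.head?_ne_false
    · exact ⟨t, rfl⟩
  obtain ⟨v, b, hv, hb, rfl⟩ := hw.exists_firstReturn
  obtain ⟨hnv, hnb⟩ := (noTripleRun_nest_append_iff hb).1 (by simpa using hnw)
  have hlen' : v.length + b.length = 2 * n + 2 := by simp at hlen; omega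
  rcases (noTripleRun_nest_iff hv).1 hnv with rfl | rfl | ⟨y, hy, hny, rfl⟩
  · exact ⟨.inl ⟨b, by simp at hlen'; omega, hb, hnb⟩, rfl⟩
  · exact ⟨.inr (.inl ⟨b, by simp at hlen'; omega, hb, hnb⟩), rfl⟩
  · have hk := hy.length_eq
    simp only [length_append, length_cons, length_nil] at hlen'
    refine ⟨.inr (.inr ⟨⟨y.count true, by omega⟩, ⟨y, hk, hy, hny⟩,
      ⟨b, by simp; omega, hb, hnb⟩⟩), ?_⟩
    exact Subtype.ext (by simp [glue, insidePart, outsidePart])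

theorem card_zero : Nat.card (DyckNoTriple 0) = 1 :=
  Nat.card_eq_one_iff_exists.2 ⟨⟨[], rfl, .nil, fun _ h => by simp at h⟩,
    fun ⟨w, hlen, _⟩ => Subtype.ext (length_eq_zero_iff.1 hlen)⟩

theorem card_one : Nat.card (DyckNoTriple 1) = 1 := by
  refine Nat.card_eq_one_iff_exists.2
    ⟨⟨[true, false], rfl, IsDyckWord.nil.nest, by unfold NoTripleRun; decide⟩, ?_⟩
  rintro ⟨_ | ⟨_ | _, _ | ⟨_ | _, _ | _⟩⟩, hlen, hw, -⟩ <;> simp at hlen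
  · exact absurd rfl hw.head?_ne_false
  · exact absurd rfl hw.head?_ne_false
  · rfl
  · simp [IsDyckWord] at hw

theorem card_add_two (n : ℕ) : Nat.card (DyckNoTriple (n + 2)) =
    Nat.card (DyckNoTriple (n + 1)) + Nat.card (DyckNoTriple n) +
      ∑ k : Fin n, Nat.card (DyckNoTriple k) * Nat.card (DyckNoTriple (n - 1 - k)) := by
  rw [← Nat.card_eq_of_bijective _ ⟨glue_injective, glue_surjective⟩, Nat.card_sum, Nat.card_sum,
    Nat.card_sigma, add_assoc]
  simp only [Nat.card_prod]

theorem card_eq_secStruct (n : ℕ) : Nat.card (DyckNoTriple n) = secStruct n := by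
  induction n using Nat.strong_induction_on with
  | _ n ih =>
    match n with
    | 0 => rw [card_zero, secStruct]
    | 1 => rw [card_one, secStruct]
    | n + 2 =>
      rw [card_add_two, secStruct, ih _ (by omega), ih _ (by omega),
        Finset.sum_attach (Finset.range n) fun k => secStruct k * secStruct (n - 1 - k),
        ← Fin.sum_univ_eq_sum_range]
      congr 1
      exact Finset.sum_congr rfl fun k _ => by rw [ih _ (by omega), ih _ (by omega)]

end DyckNoTriple

/-- The number of Dyck paths of semilength `n` with no three consecutive `U`
steps and no three consecutive `D` steps equals the secondary structure number
`S n`. -/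
theorem dyck_no_UUU_no_DDD_count (n : ℕ) :
    Nat.card {w : List Bool // w.length = 2 * n ∧ IsDyckWord w ∧
      ¬ [true, true, true] <:+: w ∧ ¬ [false, false, false] <:+: w} =
      secStruct n := by
  rw [← DyckNoTriple.card_eq_secStruct]
  exact Nat.card_congr (Equiv.subtypeEquivRight fun w => by rw [noTripleRun_iff])
end

section
/- For every n ≥ 0, the number of Dyck paths of semilength n+2 containing no factor UDU and no factor DUD equals the secondary structure number S_n. -/
/-!
Write a nonempty Dyck word by its first return as `U x D y`. It avoids `UDU` and `DUD` exactly
when `x` and `y` do, `x` is empty only if `y` is (otherwise it starts with `U D U`), and `y` does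
not start with `U D` (otherwise `D U D` straddles the returning step); for an avoiding `y` the
last condition says that `y` is not `UD` itself, i.e. its semilength is not `1`. So the numbers
`a m` of avoiding words of semilength `m` satisfy `a 0 = 1` and
`a (m + 1) = ∑ a i * a j` over `i + j = m` with `i = 0 → j = 0` and `j ≠ 1`,
and unfolding this for `m ≥ 3` gives the recurrence of `S` shifted by two.
-/

open DyckStep

namespace List

variable {α β : Type*}

theorem triple_infix_append_iff {a b c : α} {xs ys : List α} :
    [a, b, c] <:+: xs ++ ys ↔ [a, b, c] <:+: xs ∨ [a, b, c] <:+: ys ∨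
      ([a] <:+ xs ∧ [b, c] <+: ys) ∨ ([a, b] <:+ xs ∧ [c] <+: ys) := by
  rw [infix_append_iff_ne_nil]
  refine or_congr_right (or_congr_right ⟨?_, ?_⟩)
  · rintro ⟨_ | ⟨x, _ | ⟨y, _ | ⟨z, t⟩⟩⟩, l₂, h₁, h₂, h, hs, hp⟩ <;> simp_all
  · rintro (⟨hs, hp⟩ | ⟨hs, hp⟩)
    · exact ⟨[a], [b, c], by simp, by simp, rfl, hs, hp⟩
    · exact ⟨[a, b], [c], by simp, by simp, rfl, hs, hp⟩

theorem infix_map_iff_of_injective {f : α → β} (hf : Function.Injective f) {l₁ l₂ : List α} :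
    l₁.map f <:+: l₂.map f ↔ l₁ <:+: l₂ := by
  refine ⟨fun h => ?_, fun h => h.map f⟩
  obtain ⟨l, hl, he⟩ := infix_map_iff.mp h
  exact (map_inj_right fun _ _ h => hf h).mp he ▸ hl

theorem forall_prefix_iff_forall_take {P : List α → Prop} {l : List α} :
    (∀ p, p <+: l → P p) ↔ ∀ i, P (l.take i) :=
  ⟨fun h i => h _ (take_prefix i l), fun h _ hp => prefix_iff_eq_take.mp hp ▸ h _⟩

end List

namespace DyckWord

open List

variable {p x y : DyckWord}

@[simp]
theorem toList_zero : (0 : DyckWord).toList = [] := rfl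

theorem semilength_eq_zero_iff : p.semilength = 0 ↔ p = 0 := by
  rw [← toList_eq_nil, ← length_eq_zero_iff, ← two_mul_semilength_eq_length]
  omega

theorem ne_zero_of_semilength_eq_succ {m : ℕ} (h : p.semilength = m + 1) : p ≠ 0 := by
  rintro rfl
  simp at h

theorem exists_toList_eq_U_cons (hp : p ≠ 0) : ∃ t, p.toList = U :: t :=
  ⟨_, (cons_tail_dropLast_concat hp).symm⟩

theorem U_prefix_iff_ne_zero : [U] <+: p.toList ↔ p ≠ 0 := by
  refine ⟨fun h hp => by simp [hp] at h, fun hp => ?_⟩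
  obtain ⟨t, ht⟩ := exists_toList_eq_U_cons hp
  simp [ht]

theorem not_D_cons_prefix (p : DyckWord) (l : List DyckStep) : ¬ D :: l <+: p.toList := by
  rintro ⟨t, ht⟩
  have := p.count_D_le_count_U 1
  simp [← ht] at this

theorem not_suffix_concat_U (p : DyckWord) (l : List DyckStep) : ¬ l ++ [U] <:+ p.toList := by
  rintro ⟨t, ht⟩
  have := p.getLast_eq_D (by simp [← ht])
  simp [← ht] at this

theorem toList_nest_add (x y : DyckWord) :
    (x.nest + y).toList = U :: (x.toList ++ D :: y.toList) := by
  show [U] ++ x.toList ++ [D] ++ y.toList = _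
  simp

theorem UDU_infix_nest_add_iff :
    [U, D, U] <:+: (x.nest + y).toList ↔
      (x = 0 ∧ y ≠ 0) ∨ [U, D, U] <:+: x.toList ∨ [U, D, U] <:+: y.toList := by
  have hx : ¬ [U] <:+ x.toList := not_suffix_concat_U x []
  rw [toList_nest_add, infix_cons_iff, triple_infix_append_iff, infix_cons_iff]
  simp only [cons_prefix_cons, hx, true_and, false_and, reduceCtorEq, false_or]
  rcases eq_or_ne x 0 with rfl | hx0
  · simp [U_prefix_iff_ne_zero]
  · obtain ⟨t, ht⟩ := exists_toList_eq_U_cons hx0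
    simp [ht, hx0]

theorem DUD_infix_nest_add_iff :
    [D, U, D] <:+: (x.nest + y).toList ↔
      [D, U, D] <:+: x.toList ∨ [D, U, D] <:+: y.toList ∨ [U, D] <+: y.toList := by
  have hx : ¬ [D, U] <:+ x.toList := not_suffix_concat_U x [D]
  rw [toList_nest_add, infix_cons_iff, triple_infix_append_iff, infix_cons_iff]
  simp only [cons_prefix_cons, hx, not_D_cons_prefix, true_and, false_and, reduceCtorEq, false_or]
  tauto

theorem UD_prefix_iff_semilength_eq_one (hy : ¬ [U, D, U] <:+: y.toList) :
    [U, D] <+: y.toList ↔ y.semilength = 1 := by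
  constructor
  · rintro ⟨t, ht⟩
    rcases t with _ | ⟨_ | _, t⟩
    · simp [semilength, ← ht]
    · exact absurd ⟨[], t, by simp [← ht]⟩ hy
    · have := y.count_D_le_count_U 3
      simp [← ht] at this
  · intro h1
    have hy0 : y ≠ 0 := by rintro rfl; simp at h1
    obtain ⟨t, ht⟩ := exists_toList_eq_U_cons hy0
    have hlen := y.two_mul_semilength_eq_length
    rcases t with _ | ⟨_ | _, _ | ⟨_, _⟩⟩ <;> simp_all [semilength]

def NoUDUNoDUD (p : DyckWord) : Prop :=
  ¬ [U, D, U] <:+: p.toList ∧ ¬ [D, U, D] <:+: p.toList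

theorem noUDUNoDUD_nest_add_iff :
    (x.nest + y).NoUDUNoDUD ↔ x.NoUDUNoDUD ∧ y.NoUDUNoDUD ∧
      (x.semilength = 0 → y.semilength = 0) ∧ y.semilength ≠ 1 := by
  rw [NoUDUNoDUD, UDU_infix_nest_add_iff, DUD_infix_nest_add_iff, NoUDUNoDUD, NoUDUNoDUD,
    semilength_eq_zero_iff, semilength_eq_zero_iff]
  by_cases hy : [U, D, U] <:+: y.toList
  · tauto
  · have := UD_prefix_iff_semilength_eq_one hy
    tauto

end DyckWord

section Recurrence

open Finset

def admissibleSplits (m : ℕ) : Finset (ℕ × ℕ) :=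
  (antidiagonal m).filter fun ij => (ij.1 = 0 → ij.2 = 0) ∧ ij.2 ≠ 1

theorem mem_admissibleSplits {m : ℕ} {ij : ℕ × ℕ} :
    ij ∈ admissibleSplits m ↔ ij.1 + ij.2 = m ∧ (ij.1 = 0 → ij.2 = 0) ∧ ij.2 ≠ 1 := by
  rw [admissibleSplits, mem_filter, HasAntidiagonal.mem_antidiagonal]

theorem sum_admissibleSplits {M : Type*} [AddCommMonoid M] (f : ℕ → ℕ → M) (j : ℕ) :
    ∑ ij ∈ admissibleSplits (j + 3), f ij.1 ij.2 =
      f (j + 3) 0 + f 1 (j + 2) + ∑ k ∈ range j, f (k + 2) (j + 1 - k) := by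
  rw [admissibleSplits, sum_filter, Nat.sum_antidiagonal_eq_sum_range_succ
    (fun i k => if (i = 0 → k = 0) ∧ k ≠ 1 then f i k else 0),
    sum_range_succ, sum_range_succ, sum_range_succ', sum_range_succ',
    sum_congr rfl fun k hk => if_pos (by rw [mem_range] at hk; omega)]
  simp [add_comm, add_left_comm, add_assoc]

theorem secStruct_add_two (n : ℕ) : secStruct (n + 2) =
    secStruct (n + 1) + secStruct n + ∑ k ∈ range n, secStruct k * secStruct (n - 1 - k) := by
  rw [secStruct, sum_attach (range n) fun k => secStruct k * secStruct (n - 1 - k)]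

theorem eq_secStruct_of_recurrence (f : ℕ → ℕ) (h0 : f 0 = 1)
    (hrec : ∀ m, f (m + 1) = ∑ ij ∈ admissibleSplits m, f ij.1 * f ij.2) (n : ℕ) :
    f (n + 2) = secStruct n := by
  have h1 : f 1 = 1 := by simp [hrec 0, show admissibleSplits 0 = {(0, 0)} by decide, h0]
  induction n using Nat.strong_induction_on with
  | _ n ih =>
    match n with
    | 0 => simp [hrec 1, show admissibleSplits 1 = {(1, 0)} by decide, h0, h1, secStruct]
    | 1 => simp [hrec 2, hrec 1, show admissibleSplits 2 = {(2, 0)} by decide,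
        show admissibleSplits 1 = {(1, 0)} by decide, h0, h1, secStruct]
    | j + 2 =>
      rw [hrec, sum_admissibleSplits (fun i k => f i * f k), secStruct_add_two,
        ih (j + 1) (by omega), ih j (by omega), h0, h1, sum_congr rfl fun k hk => ?_]
      · ring
      · have hk : k < j := mem_range.mp hk
        rw [ih k (by omega), show j + 1 - k = j - 1 - k + 2 by omega, ih _ (by omega)]

end Recurrence

namespace DyckWord

abbrev NoUDUNoDUDOfSemilength (n : ℕ) : Type :=
  {p : DyckWord // p.semilength = n ∧ p.NoUDUNoDUD}

instance (n : ℕ) : Finite (NoUDUNoDUDOfSemilength n) :=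
  Finite.of_injective _ (Subtype.impEmbedding _ (fun p => p.semilength = n) fun _ h => h.1).injective

abbrev FirstReturnParts (m : ℕ) : Type :=
  Σ ij : admissibleSplits m, NoUDUNoDUDOfSemilength ij.1.1 × NoUDUNoDUDOfSemilength ij.1.2

-- The index `ij` is the pair of semilengths, hence determined by the two words.
theorem FirstReturnParts.ext {m : ℕ} :
    ∀ {a b : FirstReturnParts m}, a.2.1.1 = b.2.1.1 → a.2.2.1 = b.2.2.1 → a = b := by
  rintro ⟨⟨⟨i, j⟩, _⟩, ⟨x, hx, _⟩, ⟨y, hy, _⟩⟩ ⟨⟨⟨i', j'⟩, _⟩, ⟨x', hx', _⟩, ⟨y', hy', _⟩⟩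
    (rfl : x = x') (rfl : y = y')
  dsimp only at hx hy hx' hy'
  subst hx hy hx' hy'
  rfl

def firstReturnEquiv (m : ℕ) : NoUDUNoDUDOfSemilength (m + 1) ≃ FirstReturnParts m where
  toFun p :=
    have hp := ne_zero_of_semilength_eq_succ p.2.1
    have h := noUDUNoDUD_nest_add_iff.mp ((nest_insidePart_add_outsidePart hp).symm ▸ p.2.2)
    have hsl := semilength_insidePart_add_semilength_outsidePart_add_one hp
    ⟨⟨(p.1.insidePart.semilength, p.1.outsidePart.semilength),
      mem_admissibleSplits.mpr ⟨by omega, h.2.2⟩⟩, ⟨_, rfl, h.1⟩, ⟨_, rfl, h.2.1⟩⟩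
  invFun q :=
    have hsplit := mem_admissibleSplits.mp q.1.2
    ⟨q.2.1.1.nest + q.2.2.1, by simp [q.2.1.2.1, q.2.2.2.1]; omega,
      noUDUNoDUD_nest_add_iff.mpr
        ⟨q.2.1.2.2, q.2.2.2.2, by simpa [q.2.1.2.1, q.2.2.2.1] using hsplit.2⟩⟩
  left_inv p := Subtype.ext (nest_insidePart_add_outsidePart (ne_zero_of_semilength_eq_succ p.2.1))
  right_inv q := FirstReturnParts.ext (by simp) (by simp)

theorem card_noUDUNoDUDOfSemilength_zero : Nat.card (NoUDUNoDUDOfSemilength 0) = 1 := by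
  refine Nat.card_eq_one_iff_unique.mpr ⟨⟨fun p q => Subtype.ext ?_⟩, ⟨⟨0, rfl, ?_⟩⟩⟩
  · rw [semilength_eq_zero_iff.mp p.2.1, semilength_eq_zero_iff.mp q.2.1]
  · simp [NoUDUNoDUD]

theorem card_noUDUNoDUDOfSemilength_succ (m : ℕ) :
    Nat.card (NoUDUNoDUDOfSemilength (m + 1)) = ∑ ij ∈ admissibleSplits m,
      Nat.card (NoUDUNoDUDOfSemilength ij.1) * Nat.card (NoUDUNoDUDOfSemilength ij.2) := by
  rw [Nat.card_congr (firstReturnEquiv m), Nat.card_sigma,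
    ← Finset.sum_coe_sort (admissibleSplits m)]
  simp only [Nat.card_prod]

end DyckWord

section BoolWords

open List

def DyckStep.equivBool : DyckStep ≃ Bool where
  toFun | U => true | D => false
  invFun | true => U | false => D
  left_inv s := by cases s <;> rfl
  right_inv b := by cases b <;> rfl

theorem isDyckWord_iff_map_equivBool_symm (w : List Bool) :
    IsDyckWord w ↔ (w.map equivBool.symm).count U = (w.map equivBool.symm).count D ∧
      ∀ i, ((w.map equivBool.symm).take i).count D ≤ ((w.map equivBool.symm).take i).count U := by
  simp only [IsDyckWord, forall_prefix_iff_forall_take, ← map_take,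
    show U = equivBool.symm true from rfl, show D = equivBool.symm false from rfl,
    count_map_of_injective _ _ equivBool.symm.injective]

open DyckWord in
def equivBoolWords (n : ℕ) : NoUDUNoDUDOfSemilength n ≃
    {w : List Bool // w.length = 2 * n ∧ IsDyckWord w ∧
      ¬ [true, false, true] <:+: w ∧ ¬ [false, true, false] <:+: w} where
  toFun p := ⟨p.1.toList.map equivBool, by
    refine ⟨by rw [length_map, ← two_mul_semilength_eq_length, p.2.1], ?_, ?_, ?_⟩
    · rw [isDyckWord_iff_map_equivBool_symm]
      simpa using ⟨p.1.count_U_eq_count_D, p.1.count_D_le_count_U⟩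
    · exact (infix_map_iff_of_injective (l₁ := [U, D, U]) equivBool.injective).not.mpr p.2.2.1
    · exact (infix_map_iff_of_injective (l₁ := [D, U, D]) equivBool.injective).not.mpr p.2.2.2⟩
  invFun w :=
    have hw := (isDyckWord_iff_map_equivBool_symm w.1).mp w.2.2.1
    ⟨⟨w.1.map equivBool.symm, hw.1, hw.2⟩, by
      refine ⟨?_, ?_, ?_⟩
      · have := two_mul_semilength_eq_length (p := ⟨w.1.map equivBool.symm, hw.1, hw.2⟩)
        simp only [length_map, w.2.1] at this
        omega
      · exact (infix_map_iff_of_injective (l₁ := [true, false, true])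
          equivBool.symm.injective).not.mpr w.2.2.2.1
      · exact (infix_map_iff_of_injective (l₁ := [false, true, false])
          equivBool.symm.injective).not.mpr w.2.2.2.2⟩
  left_inv p := by ext : 2; simp
  right_inv w := by ext : 1; simp

end BoolWords

/-- The number of Dyck paths of semilength `n + 2` with no factor `UDU` and no
factor `DUD` equals the secondary structure number `S n`. -/
theorem dyck_no_UDU_no_DUD_count (n : ℕ) :
    Nat.card {w : List Bool // w.length = 2 * (n + 2) ∧ IsDyckWord w ∧
      ¬ [true, false, true] <:+: w ∧ ¬ [false, true, false] <:+: w} =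
      secStruct n := by
  rw [← Nat.card_congr (equivBoolWords (n + 2))]
  exact eq_secStruct_of_recurrence (fun m => Nat.card (DyckWord.NoUDUNoDUDOfSemilength m))
    DyckWord.card_noUDUNoDUDOfSemilength_zero DyckWord.card_noUDUNoDUDOfSemilength_succ n
end

section
/- For every n ≥ 0, the number of simsun permutations of {1,…,n} that avoid the pattern 213 equals the Motzkin number M_n. -/
/-- `π` contains the pattern 213. -/
def Contains213 {n : ℕ} (π : Equiv.Perm (Fin n)) : Prop :=
  ∃ a b c : Fin n, a < b ∧ b < c ∧ π b < π a ∧ π a < π c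

/-- The Motzkin numbers: `M 0 = 1` and
`M (n+1) = M n + ∑_{k=0}^{n-1} M k * M (n-1-k)`. -/
def motzkin : ℕ → ℕ
  | 0 => 1
  | n + 1 => motzkin n + ∑ k ∈ (Finset.range n).attach, motzkin k * motzkin (n - 1 - k)
decreasing_by
  all_goals first
    | omega
    | (have := Finset.mem_range.mp k.2; omega)

/-!
Write permutations in one-line notation as words in `0, …, n - 1`. For a 213-avoider the simsun
condition only has to be checked on the word itself, so we count the *admissible* words: those
avoiding 213 and without double descent. Splitting one at its minimum as `A 0 B`, avoiding 213
forces every entry of `A` above every entry of `B`, and excluding double descents forces `A` to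
end with an ascent; conversely any two such words glue back. In a 213-avoider ending with an
ascent the last entry is one more than the entry before it, so deleting it is a bijection onto
the admissible words of one size less. Summing over `|A|` gives the Motzkin recurrence.
-/

namespace SimsunAvoid213

open List

def entry (l : List ℕ) (i : ℕ) : ℕ := l.getD i 0

section Entry

variable {l l₁ l₂ : List ℕ} {i : ℕ}

lemma entry_eq_getElem (h : i < l.length) : entry l i = l[i] :=
  List.getD_eq_getElem _ _ h

lemma entry_mem (h : i < l.length) : entry l i ∈ l := by
  rw [entry_eq_getElem h]; exact List.getElem_mem h

lemma mem_iff_exists_entry {a : ℕ} : a ∈ l ↔ ∃ i < l.length, entry l i = a := by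
  rw [List.mem_iff_getElem]
  exact exists_congr fun i => ⟨fun ⟨hi, h⟩ => ⟨hi, by rw [entry_eq_getElem hi, h]⟩,
    fun ⟨hi, h⟩ => ⟨hi, by rw [← entry_eq_getElem hi, h]⟩⟩

lemma entry_injective (hl : l.Nodup) {j : ℕ} (hi : i < l.length) (hj : j < l.length)
    (h : entry l i = entry l j) : i = j := by
  rw [entry_eq_getElem hi, entry_eq_getElem hj] at h
  exact hl.getElem_inj_iff.mp h

lemma entry_append_left (h : i < l₁.length) : entry (l₁ ++ l₂) i = entry l₁ i :=
  List.getD_append _ _ _ _ h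

lemma entry_append_right (h : l₁.length ≤ i) :
    entry (l₁ ++ l₂) i = entry l₂ (i - l₁.length) :=
  List.getD_append_right _ _ _ _ h

lemma entry_map {f : ℕ → ℕ} (h : i < l.length) : entry (l.map f) i = f (entry l i) := by
  rw [entry_eq_getElem h, entry_eq_getElem (by simpa using h), List.getElem_map]

lemma entry_append_zero_cons_length : entry (l₁ ++ 0 :: l₂) l₁.length = 0 := by
  simp [entry]

lemma entry_append_zero_cons_of_lt (h : l₁.length < i) :
    entry (l₁ ++ 0 :: l₂) i = entry l₂ (i - l₁.length - 1) := by
  rw [entry_append_right h.le, show i - l₁.length = i - l₁.length - 1 + 1 by omega]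
  simp [entry]

end Entry

lemma perm_range_iff {l : List ℕ} {n : ℕ} :
    l ~ List.range n ↔ l.Nodup ∧ l.length = n ∧ ∀ x ∈ l, x < n := by
  refine ⟨fun h => ⟨h.nodup_iff.mpr List.nodup_range, by simpa using h.length_eq,
    fun x hx => List.mem_range.mp (h.mem_iff.mp hx)⟩, fun ⟨hl, hlen, hlt⟩ => ?_⟩
  exact (List.subperm_of_subset hl fun x hx => List.mem_range.mpr (hlt x hx)).perm_of_length_le
    (by simp [hlen])

def Avoids213 (l : List ℕ) : Prop :=
  ∀ i j k, i < j → j < k → k < l.length → ¬ (entry l j < entry l i ∧ entry l i < entry l k)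

def NoDoubleDescent (l : List ℕ) : Prop :=
  ∀ i, i + 2 < l.length → ¬ (entry l (i + 2) < entry l (i + 1) ∧ entry l (i + 1) < entry l i)

def EndsWithAscent (l : List ℕ) : Prop :=
  ∀ i, i + 2 = l.length → entry l i < entry l (i + 1)

def IsAdmissible (n : ℕ) (l : List ℕ) : Prop :=
  l ~ List.range n ∧ Avoids213 l ∧ NoDoubleDescent l

section Relabel

variable {f : ℕ → ℕ} {l : List ℕ}

lemma entry_map_lt_entry_map_iff (hf : StrictMonoOn f {x | x ∈ l}) {i j : ℕ}
    (hi : i < l.length) (hj : j < l.length) :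
    entry (l.map f) i < entry (l.map f) j ↔ entry l i < entry l j := by
  rw [entry_map hi, entry_map hj]
  exact hf.lt_iff_lt (entry_mem hi) (entry_mem hj)

lemma avoids213_map_iff (hf : StrictMonoOn f {x | x ∈ l}) :
    Avoids213 (l.map f) ↔ Avoids213 l := by
  simp only [Avoids213, List.length_map]
  refine forall₃_congr fun i j k => forall₃_congr fun hij hjk hk => ?_
  rw [entry_map_lt_entry_map_iff hf (by omega) (by omega),
    entry_map_lt_entry_map_iff hf (by omega) (by omega)]

lemma noDoubleDescent_map_iff (hf : StrictMonoOn f {x | x ∈ l}) :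
    NoDoubleDescent (l.map f) ↔ NoDoubleDescent l := by
  simp only [NoDoubleDescent, List.length_map]
  refine forall₂_congr fun i hi => ?_
  rw [entry_map_lt_entry_map_iff hf (by omega) (by omega),
    entry_map_lt_entry_map_iff hf (by omega) (by omega)]

lemma endsWithAscent_map_iff (hf : StrictMonoOn f {x | x ∈ l}) :
    EndsWithAscent (l.map f) ↔ EndsWithAscent l := by
  simp only [EndsWithAscent, List.length_map]
  exact forall₂_congr fun i hi => entry_map_lt_entry_map_iff hf (by omega) (by omega)

end Relabel

section Append

variable {l₁ l₂ : List ℕ}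

lemma Avoids213.of_append_left (h : Avoids213 (l₁ ++ l₂)) : Avoids213 l₁ := by
  intro i j k hij hjk hk
  have := h i j k hij hjk (by simp; omega)
  rwa [entry_append_left (by omega), entry_append_left (by omega),
    entry_append_left (by omega)] at this

lemma Avoids213.of_append_right (h : Avoids213 (l₁ ++ l₂)) : Avoids213 l₂ := by
  intro i j k hij hjk hk
  have := h (l₁.length + i) (l₁.length + j) (l₁.length + k) (by omega) (by omega)
    (by simp; omega)
  rwa [entry_append_right (by omega), entry_append_right (by omega),
    entry_append_right (by omega), Nat.add_sub_cancel_left, Nat.add_sub_cancel_left,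
    Nat.add_sub_cancel_left] at this

lemma NoDoubleDescent.of_append_left (h : NoDoubleDescent (l₁ ++ l₂)) :
    NoDoubleDescent l₁ := by
  intro i hi
  have := h i (by simp; omega)
  rwa [entry_append_left (by omega), entry_append_left (by omega),
    entry_append_left (by omega)] at this

lemma NoDoubleDescent.of_append_right (h : NoDoubleDescent (l₁ ++ l₂)) :
    NoDoubleDescent l₂ := by
  intro i hi
  have := h (l₁.length + i) (by simp; omega)
  rwa [entry_append_right (by omega), entry_append_right (by omega),
    entry_append_right (by omega), add_assoc, add_assoc, Nat.add_sub_cancel_left,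
    Nat.add_sub_cancel_left, Nat.add_sub_cancel_left] at this

end Append

lemma strictMonoOn_sub_const {l : List ℕ} {c : ℕ} (h : ∀ x ∈ l, c ≤ x) :
    StrictMonoOn (· - c) {x | x ∈ l} :=
  fun x hx y hy hxy => by have := h x hx; have := h y hy; simp only; omega

section SplitAtZero

variable {A B : List ℕ}

lemma avoids213_append_zero_cons (hA : Avoids213 A) (hB : Avoids213 B)
    (hAB : ∀ a ∈ A, ∀ b ∈ B, b < a) : Avoids213 (A ++ 0 :: B) := by
  intro i j k hij hjk hk hc
  simp only [List.length_append, List.length_cons] at hk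
  rcases Nat.lt_trichotomy k A.length with hkA | rfl | hkA
  · rw [entry_append_left (by omega), entry_append_left (by omega),
      entry_append_left hkA] at hc
    exact hA i j k hij hjk hkA hc
  · rw [entry_append_zero_cons_length] at hc; omega
  rcases Nat.lt_trichotomy i A.length with hiA | rfl | hiA
  · rw [entry_append_left hiA, entry_append_zero_cons_of_lt hkA] at hc
    exact (hAB _ (entry_mem hiA) _ (entry_mem (by omega))).not_gt hc.2
  · rw [entry_append_zero_cons_length] at hc; omega
  · rw [entry_append_zero_cons_of_lt hiA, entry_append_zero_cons_of_lt (by omega),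
      entry_append_zero_cons_of_lt hkA] at hc
    exact hB _ _ _ (by omega) (by omega) (by omega) hc

lemma noDoubleDescent_append_zero_cons (hA : NoDoubleDescent A) (hA' : EndsWithAscent A)
    (hB : NoDoubleDescent B) : NoDoubleDescent (A ++ 0 :: B) := by
  intro i hi hc
  simp only [List.length_append, List.length_cons] at hi
  rcases Nat.lt_or_ge (i + 2) A.length with h | h
  · rw [entry_append_left h, entry_append_left (by omega), entry_append_left (by omega)] at hc
    exact hA i h hc
  obtain h | h | rfl | h :
      i + 2 = A.length ∨ i + 1 = A.length ∨ i = A.length ∨ A.length < i := by omega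
  · rw [h, entry_append_zero_cons_length, entry_append_left (by omega),
      entry_append_left (by omega)] at hc
    exact absurd (hA' i h) (by omega)
  · rw [h, entry_append_zero_cons_length] at hc; omega
  · rw [entry_append_zero_cons_length] at hc; omega
  · rw [entry_append_zero_cons_of_lt h, entry_append_zero_cons_of_lt (by omega),
      entry_append_zero_cons_of_lt (by omega),
      show i + 1 - A.length - 1 = i - A.length - 1 + 1 by omega,
      show i + 2 - A.length - 1 = i - A.length - 1 + 2 by omega] at hc
    exact hB _ (by omega) hc

lemma Avoids213.not_lt_of_append_zero_cons (h : Avoids213 (A ++ 0 :: B)) {a b : ℕ}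
    (ha : a ∈ A) (hb : b ∈ B) (ha0 : 0 < a) : ¬ a < b := by
  obtain ⟨i, hi, rfl⟩ := mem_iff_exists_entry.mp ha
  obtain ⟨p, hp, rfl⟩ := mem_iff_exists_entry.mp hb
  intro hab
  refine h i A.length (A.length + 1 + p) hi (by omega) (by simp; omega) ?_
  rw [entry_append_zero_cons_length, entry_append_left hi,
    entry_append_zero_cons_of_lt (by omega), show A.length + 1 + p - A.length - 1 = p by omega]
  exact ⟨ha0, hab⟩

lemma NoDoubleDescent.endsWithAscent_of_append_zero_cons (h : NoDoubleDescent (A ++ 0 :: B))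
    (hA : A.Nodup) (hA0 : 0 ∉ A) : EndsWithAscent A := by
  intro i hi
  have hne : entry A i ≠ entry A (i + 1) := fun he =>
    absurd (entry_injective hA (by omega) (by omega) he) (by omega)
  have hpos : 0 < entry A (i + 1) :=
    Nat.pos_of_ne_zero fun h0 => hA0 (h0 ▸ entry_mem (by omega))
  have := h i (by simp; omega)
  rw [hi, entry_append_zero_cons_length, entry_append_left (by omega),
    entry_append_left (by omega)] at this
  omega

end SplitAtZero

section Bounds

variable {L R : List ℕ} {N : ℕ}

lemma length_le_of_append_perm_range (h : L ++ R ~ List.range N)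
    (hRL : ∀ x ∈ L, ∀ r ∈ R, r < x) {x : ℕ} (hx : x ∈ L) : R.length ≤ x := by
  have hR : R.Nodup := (perm_range_iff.mp h).1.of_append_right
  have hsub : R.toFinset ⊆ Finset.range x := fun r hr =>
    Finset.mem_range.mpr (hRL x hx r (List.mem_toFinset.mp hr))
  simpa [List.toFinset_card_of_nodup hR] using Finset.card_le_card hsub

lemma lt_length_of_append_perm_range (h : L ++ R ~ List.range N)
    (hRL : ∀ x ∈ L, ∀ r ∈ R, r < x) {r : ℕ} (hr : r ∈ R) : r < R.length := by
  obtain ⟨hnd, hlen, hlt⟩ := perm_range_iff.mp h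
  have hsub : L.toFinset ⊆ Finset.Ioo r N := fun x hx => by
    have hx := List.mem_toFinset.mp hx
    exact Finset.mem_Ioo.mpr ⟨hRL x hx r hr, hlt x (List.mem_append_left R hx)⟩
  have hcard := Finset.card_le_card hsub
  rw [List.toFinset_card_of_nodup hnd.of_append_left, Nat.card_Ioo] at hcard
  have := hlt r (List.mem_append_right L hr)
  simp only [List.length_append] at hlen
  omega

end Bounds

/-- In the usual notation for permutation patterns this is the skew sum `A ⊖ (1 ⊕ B)`. -/
def joinAtMin (A B : List ℕ) : List ℕ := A.map (· + (B.length + 1)) ++ 0 :: B.map (· + 1)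

lemma joinAtMin_inj {A₁ B₁ A₂ B₂ : List ℕ} (h : joinAtMin A₁ B₁ = joinAtMin A₂ B₂) :
    A₁ = A₂ ∧ B₁ = B₂ := by
  have hlen : A₁.length = A₂.length := by
    have := congrArg (List.idxOf 0) h
    simpa [joinAtMin, List.idxOf_append_of_notMem] using this
  obtain ⟨hA, hB⟩ := List.append_inj h (by simpa using hlen)
  have hB : B₁ = B₂ :=
    List.map_injective_iff.mpr (add_left_injective 1) ((List.cons_inj_right _).mp hB)
  subst hB
  exact ⟨List.map_injective_iff.mpr (add_left_injective _) hA, rfl⟩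

lemma joinAtMin_perm_range {j m : ℕ} {A B : List ℕ} (hA : A ~ List.range j)
    (hB : B ~ List.range m) : joinAtMin A B ~ List.range (j + m + 1) := by
  have hBlen : B.length = m := by simpa using hB.length_eq
  rw [joinAtMin, hBlen, show j + m + 1 = m + 1 + j by omega, List.range_add,
    List.range_succ_eq_map]
  refine ((hA.map _).append ((hB.map _).cons 0)).trans (List.perm_append_comm.trans ?_)
  exact List.Perm.of_eq (by simp [Nat.add_comm])

lemma isAdmissible_joinAtMin {j m : ℕ} {A B : List ℕ} (hA : IsAdmissible j A)
    (hA' : EndsWithAscent A) (hB : IsAdmissible m B) :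
    IsAdmissible (j + m + 1) (joinAtMin A B) := by
  have hAB : ∀ a ∈ A.map (· + (B.length + 1)), ∀ b ∈ B.map (· + 1), b < a := by
    simp only [List.mem_map]
    rintro _ ⟨a, -, rfl⟩ _ ⟨b, hb, rfl⟩
    obtain ⟨-, hlen, hlt⟩ := perm_range_iff.mp hB.1
    have := hlt b hb
    omega
  have hmono (c : ℕ) (l : List ℕ) : StrictMonoOn (· + c) {x | x ∈ l} :=
    add_left_strictMono.strictMonoOn _
  refine ⟨joinAtMin_perm_range hA.1 hB.1, ?_, ?_⟩
  · exact avoids213_append_zero_cons ((avoids213_map_iff (hmono _ _)).mpr hA.2.1)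
      ((avoids213_map_iff (hmono _ _)).mpr hB.2.1) hAB
  · exact noDoubleDescent_append_zero_cons ((noDoubleDescent_map_iff (hmono _ _)).mpr hA.2.2)
      ((endsWithAscent_map_iff (hmono _ _)).mpr hA')
      ((noDoubleDescent_map_iff (hmono _ _)).mpr hB.2.2)

lemma isAdmissible_map_sub {l : List ℕ} {c : ℕ} (h213 : Avoids213 l) (hdd : NoDoubleDescent l)
    (hnd : l.Nodup) (hmem : ∀ x ∈ l, c ≤ x ∧ x < c + l.length) :
    IsAdmissible l.length (l.map (· - c)) := by
  have hf := strictMonoOn_sub_const fun x hx => (hmem x hx).1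
  refine ⟨perm_range_iff.mpr ⟨hnd.map_on fun x hx y hy h => hf.injOn hx hy h, by simp, ?_⟩,
    (avoids213_map_iff hf).mpr h213, (noDoubleDescent_map_iff hf).mpr hdd⟩
  simp only [List.mem_map]
  rintro _ ⟨x, hx, rfl⟩
  have := hmem x hx
  omega

lemma map_sub_map_add {l : List ℕ} {c : ℕ} (h : ∀ x ∈ l, c ≤ x) :
    (l.map (· - c)).map (· + c) = l := by
  rw [List.map_map]
  exact List.map_congr_left (fun x hx => by simp [Nat.sub_add_cancel (h x hx)]) |>.trans
    (List.map_id l)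

lemma IsAdmissible.lt_of_append_zero_cons {N : ℕ} {A B : List ℕ}
    (hl : IsAdmissible N (A ++ 0 :: B)) {a r : ℕ} (ha : a ∈ A) (hr : r ∈ 0 :: B) : r < a := by
  obtain ⟨-, -, hdisj⟩ := List.nodup_append.mp (perm_range_iff.mp hl.1).1
  have ha0 : 0 < a := Nat.pos_of_ne_zero fun h => hdisj a ha 0 List.mem_cons_self h
  rcases List.mem_cons.mp hr with rfl | hr
  · exact ha0
  · exact lt_of_le_of_ne (not_lt.mp (hl.2.1.not_lt_of_append_zero_cons ha hr ha0))
      fun h => hdisj a ha r (List.mem_cons_of_mem 0 hr) h.symm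

lemma exists_joinAtMin_eq {n : ℕ} {l : List ℕ} (hl : IsAdmissible (n + 1) l) :
    ∃ A B, IsAdmissible A.length A ∧ EndsWithAscent A ∧ IsAdmissible B.length B ∧
      joinAtMin A B = l := by
  obtain ⟨hnd, hlen, hlt⟩ := perm_range_iff.mp hl.1
  obtain ⟨A, B, rfl⟩ := List.append_of_mem (hl.1.mem_iff.mpr (List.mem_range.mpr n.succ_pos))
  obtain ⟨hAnd, hBnd', hdisj⟩ := List.nodup_append.mp hnd
  obtain ⟨hB0, hBnd⟩ := List.nodup_cons.mp hBnd'
  have hA0 : 0 ∉ A := fun h0 => hdisj 0 h0 0 List.mem_cons_self rfl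
  have hRL : ∀ a ∈ A, ∀ r ∈ 0 :: B, r < a := fun a ha r hr => hl.lt_of_append_zero_cons ha hr
  have hAmem : ∀ a ∈ A, B.length + 1 ≤ a ∧ a < B.length + 1 + A.length := fun a ha =>
    ⟨length_le_of_append_perm_range hl.1 hRL ha, by
      have := hlt a (List.mem_append_left _ ha)
      simp only [List.length_append, List.length_cons] at hlen
      omega⟩
  have hBmem : ∀ b ∈ B, 1 ≤ b ∧ b < 1 + B.length := fun b hb =>
    ⟨Nat.pos_of_ne_zero fun h => hB0 (h ▸ hb), by
      simpa [Nat.add_comm] using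
        lt_length_of_append_perm_range hl.1 hRL (List.mem_cons_of_mem 0 hb)⟩
  obtain ⟨-, h213, hdd⟩ := hl
  have h213B : Avoids213 ([0] ++ B) := h213.of_append_right
  have hddB : NoDoubleDescent ([0] ++ B) := hdd.of_append_right
  refine ⟨A.map (· - (B.length + 1)), B.map (· - 1), ?_, ?_, ?_, ?_⟩
  · simpa using isAdmissible_map_sub h213.of_append_left hdd.of_append_left hAnd hAmem
  · exact (endsWithAscent_map_iff (strictMonoOn_sub_const fun a ha => (hAmem a ha).1)).mpr
      (hdd.endsWithAscent_of_append_zero_cons hAnd hA0)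
  · simpa using isAdmissible_map_sub h213B.of_append_right hddB.of_append_right hBnd hBmem
  · simp only [joinAtMin, List.length_map]
    rw [map_sub_map_add fun a ha => (hAmem a ha).1, map_sub_map_add fun b hb => (hBmem b hb).1]

section AppendSingleton

variable {l : List ℕ} {w : ℕ}

lemma Avoids213.append_singleton (h : Avoids213 l)
    (hw : ∀ i j, i < j → j < l.length → ¬ (entry l j < entry l i ∧ entry l i < w)) :
    Avoids213 (l ++ [w]) := by
  intro i j k hij hjk hk
  simp only [List.length_append, List.length_singleton] at hk
  rw [entry_append_left (by omega), entry_append_left (by omega)]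
  rcases Nat.lt_or_ge k l.length with hkl | hkl
  · rw [entry_append_left hkl]
    exact h i j k hij hjk hkl
  · rw [show k = l.length by omega]
    simpa [entry] using hw i j hij (by omega)

lemma NoDoubleDescent.append_singleton (h : NoDoubleDescent l)
    (hw : ∀ i, i + 2 = l.length → ¬ (w < entry l (i + 1) ∧ entry l (i + 1) < entry l i)) :
    NoDoubleDescent (l ++ [w]) := by
  intro i hi
  simp only [List.length_append, List.length_singleton] at hi
  rw [entry_append_left (i := i) (by omega), entry_append_left (i := i + 1) (by omega)]
  rcases Nat.lt_or_ge (i + 2) l.length with hil | hil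
  · rw [entry_append_left hil]
    exact h i hil
  · rw [show i + 2 = l.length by omega]
    simpa [entry] using hw i (by omega)

end AppendSingleton

def shiftFrom (v x : ℕ) : ℕ := if v ≤ x then x + 1 else x

def unshiftFrom (v x : ℕ) : ℕ := if v < x then x - 1 else x

lemma unshiftFrom_shiftFrom (v x : ℕ) : unshiftFrom v (shiftFrom v x) = x := by
  unfold shiftFrom unshiftFrom; split_ifs <;> omega

lemma shiftFrom_unshiftFrom {v x : ℕ} (h : x ≠ v) : shiftFrom v (unshiftFrom v x) = x := by
  unfold shiftFrom unshiftFrom; split_ifs <;> omega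

lemma shiftFrom_of_lt {v x : ℕ} (h : x < v) : shiftFrom v x = x := if_neg (by omega)

lemma lt_of_shiftFrom_lt {v x : ℕ} (h : shiftFrom v x < v) : x < v := by
  unfold shiftFrom at h; split_ifs at h <;> omega

lemma shiftFrom_ne (v x : ℕ) : shiftFrom v x ≠ v := by
  unfold shiftFrom; split_ifs <;> omega

lemma shiftFrom_le_succ (v x : ℕ) : shiftFrom v x ≤ x + 1 := by
  unfold shiftFrom; split_ifs <;> omega

lemma strictMono_shiftFrom (v : ℕ) : StrictMono (shiftFrom v) := fun x y h => by
  unfold shiftFrom; split_ifs <;> omega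

lemma strictMonoOn_unshiftFrom {v : ℕ} {l : List ℕ} (h : v ∉ l) :
    StrictMonoOn (unshiftFrom v) {x | x ∈ l} := fun x hx y hy hxy => by
  have : x ≠ v := fun e => h (e ▸ hx)
  have : y ≠ v := fun e => h (e ▸ hy)
  unfold unshiftFrom; split_ifs <;> omega

def lastSucc (s : List ℕ) : ℕ := s.getLast?.elim 0 (· + 1)

def appendAboveLast (s : List ℕ) : List ℕ := s.map (shiftFrom (lastSucc s)) ++ [lastSucc s]

def dropLastStd (t : List ℕ) : List ℕ := t.dropLast.map (unshiftFrom (t.getLastD 0))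

lemma dropLastStd_appendAboveLast (s : List ℕ) : dropLastStd (appendAboveLast s) = s := by
  simp [dropLastStd, appendAboveLast, Function.comp_def, unshiftFrom_shiftFrom]

lemma lastSucc_concat (u : List ℕ) (x : ℕ) : lastSucc (u ++ [x]) = x + 1 := by
  simp [lastSucc]

lemma lastSucc_le {k : ℕ} {s : List ℕ} (hs : s ~ List.range k) : lastSucc s ≤ k := by
  rcases List.eq_nil_or_concat' s with rfl | ⟨u, x, rfl⟩
  · simp [lastSucc]
  · rw [lastSucc_concat]
    exact (perm_range_iff.mp hs).2.2 x (by simp)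

/-- A value strictly between the last two entries would have to come earlier, forming a 213. -/
lemma eq_lastSucc_of_avoids213 {N w : ℕ} {u : List ℕ} (hperm : u ++ [w] ~ List.range N)
    (h213 : Avoids213 (u ++ [w])) (hasc : EndsWithAscent (u ++ [w])) : w = lastSucc u := by
  obtain ⟨hnd, hlen, hlt⟩ := perm_range_iff.mp hperm
  rcases List.eq_nil_or_concat' u with rfl | ⟨u, x, rfl⟩
  · have : N = 1 := by simpa using hlen.symm
    subst this
    simpa [lastSucc] using hlt w (by simp)
  rw [lastSucc_concat]
  have hx : entry (u ++ [x] ++ [w]) u.length = x := by simp [entry]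
  have hw : entry (u ++ [x] ++ [w]) (u.length + 1) = w := by simp [entry]
  have hxw : x < w := by simpa only [hx, hw] using hasc u.length (by simp)
  by_contra hne
  have hmem : x + 1 ∈ u ++ [x] ++ [w] :=
    hperm.mem_iff.mpr (List.mem_range.mpr (by have := hlt w (by simp); omega))
  obtain ⟨p, hp, hpx⟩ := mem_iff_exists_entry.mp hmem
  simp only [List.length_append, List.length_singleton] at hp
  have hpu : p < u.length := by
    by_contra hpu
    obtain rfl | rfl : p = u.length ∨ p = u.length + 1 := by omega
    · rw [hx] at hpx; omega
    · rw [hw] at hpx; omega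
  exact h213 p u.length (u.length + 1) hpu (by omega) (by simp) (by rw [hx, hw, hpx]; omega)

lemma appendAboveLast_perm_range {k : ℕ} {s : List ℕ} (hs : s ~ List.range k) :
    appendAboveLast s ~ List.range (k + 1) := by
  obtain ⟨hnd, hlen, hlt⟩ := perm_range_iff.mp hs
  refine perm_range_iff.mpr ⟨List.nodup_append.mpr ⟨hnd.map (strictMono_shiftFrom _).injective,
    List.nodup_singleton _, ?_⟩, by simp [appendAboveLast, hlen], ?_⟩
  · simp only [List.mem_map, List.mem_singleton]
    rintro _ ⟨y, -, rfl⟩ _ rfl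
    exact shiftFrom_ne _ y
  · simp only [appendAboveLast, List.mem_append, List.mem_map, List.mem_singleton]
    rintro _ (⟨y, hy, rfl⟩ | rfl)
    · have := hlt y hy; have := shiftFrom_le_succ (lastSucc s) y; omega
    · exact Nat.lt_succ_of_le (lastSucc_le hs)

lemma isAdmissible_appendAboveLast {k : ℕ} {s : List ℕ} (hs : IsAdmissible k s) :
    IsAdmissible (k + 1) (appendAboveLast s) ∧ EndsWithAscent (appendAboveLast s) := by
  obtain ⟨hperm, h213, hdd⟩ := hs
  have hperm' := appendAboveLast_perm_range hperm
  rcases List.eq_nil_or_concat' s with rfl | ⟨u, x, rfl⟩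
  · have hlen1 : (appendAboveLast []).length = 1 := rfl
    refine ⟨⟨hperm', fun i j k _ _ hk => ?_, fun i hi => ?_⟩, fun i hi => ?_⟩ <;> omega
  have hmono := (strictMono_shiftFrom (x + 1)).strictMonoOn {y | y ∈ u ++ [x]}
  have hlast : entry (u ++ [x]) u.length = x := by simp [entry]
  rw [appendAboveLast, lastSucc_concat] at hperm' ⊢
  refine ⟨⟨hperm', ((avoids213_map_iff hmono).mpr h213).append_singleton ?_,
    ((noDoubleDescent_map_iff hmono).mpr hdd).append_singleton ?_⟩, ?_⟩
  · -- a 213 ending at the new entry `x + 1` yields one ending at `x`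
    rintro i j hij hj ⟨hji, hiv⟩
    simp only [List.length_map, List.length_append, List.length_singleton] at hj
    have hi : i < (u ++ [x]).length := by simp; omega
    rw [entry_map hi] at hiv
    replace hiv := lt_of_shiftFrom_lt hiv
    have hji' := (entry_map_lt_entry_map_iff hmono (by simp; omega) hi).mp hji
    have hju : j < u.length := by
      by_contra hju
      rw [show j = u.length by omega, hlast] at hji'
      omega
    have hix : entry (u ++ [x]) i ≠ x := fun h =>
      absurd (entry_injective (perm_range_iff.mp hperm).1 hi (by simp) (h.trans hlast.symm))
        (by omega)
    exact h213 i j u.length hij hju (by simp) ⟨hji', by omega⟩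
  · intro i hi
    simp only [List.length_map, List.length_append, List.length_singleton] at hi
    rw [entry_map (by simp; omega), show i + 1 = u.length by omega, hlast,
      shiftFrom_of_lt (Nat.lt_succ_self x)]
    omega
  · intro i hi
    simp only [List.length_map, List.length_append, List.length_singleton] at hi
    obtain rfl : i = u.length := by omega
    simp [entry, shiftFrom_of_lt (Nat.lt_succ_self x)]

lemma lastSucc_map_unshiftFrom (u : List ℕ) :
    lastSucc (u.map (unshiftFrom (lastSucc u))) = lastSucc u := by
  rcases List.eq_nil_or_concat' u with rfl | ⟨u, x, rfl⟩
  · rfl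
  · simp [lastSucc_concat, unshiftFrom]

lemma exists_eq_concat_of_perm_range_succ {k : ℕ} {t : List ℕ} (ht : t ~ List.range (k + 1)) :
    ∃ u w, t = u ++ [w] :=
  (List.eq_nil_or_concat' t).resolve_left fun h => by simpa [h] using ht.length_eq

lemma isAdmissible_dropLastStd {k : ℕ} {t : List ℕ} (ht : IsAdmissible (k + 1) t) :
    IsAdmissible k (dropLastStd t) := by
  obtain ⟨hperm, h213, hdd⟩ := ht
  obtain ⟨u, w, rfl⟩ := exists_eq_concat_of_perm_range_succ hperm
  obtain ⟨hnd, hlen, hlt⟩ := perm_range_iff.mp hperm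
  have hwu : w ∉ u := fun h => (List.nodup_append.mp hnd).2.2 w h w (by simp) rfl
  have hmono := strictMonoOn_unshiftFrom hwu
  simp only [dropLastStd, List.dropLast_concat, List.getLastD_concat]
  refine ⟨perm_range_iff.mpr ⟨(List.nodup_append.mp hnd).1.map_on fun x hx y hy h =>
    hmono.injOn hx hy h, by simp at hlen ⊢; omega, ?_⟩, (avoids213_map_iff hmono).mpr
    h213.of_append_left, (noDoubleDescent_map_iff hmono).mpr hdd.of_append_left⟩
  simp only [List.mem_map]
  rintro _ ⟨x, hx, rfl⟩
  have := hlt x (by simp [hx])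
  have := hlt w (by simp)
  have : x ≠ w := fun h => hwu (h ▸ hx)
  unfold unshiftFrom; split_ifs <;> omega

lemma appendAboveLast_dropLastStd {k : ℕ} {t : List ℕ} (ht : IsAdmissible (k + 1) t)
    (hasc : EndsWithAscent t) : appendAboveLast (dropLastStd t) = t := by
  obtain ⟨hperm, h213, -⟩ := ht
  obtain ⟨u, w, rfl⟩ := exists_eq_concat_of_perm_range_succ hperm
  have hw := eq_lastSucc_of_avoids213 hperm h213 hasc
  have hwu : w ∉ u := fun h =>
    (List.nodup_append.mp (perm_range_iff.mp hperm).1).2.2 w h w (by simp) rfl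
  simp only [dropLastStd, appendAboveLast, List.dropLast_concat, List.getLastD_concat]
  rw [hw, lastSucc_map_unshiftFrom, ← hw, List.map_map]
  congr 1
  refine (List.map_congr_left fun x hx => ?_).trans (List.map_id u)
  exact shiftFrom_unshiftFrom fun h => hwu (h ▸ hx)

abbrev Admissible (n : ℕ) := {l : List ℕ // IsAdmissible n l}

abbrev AdmissibleAsc (n : ℕ) := {l : List ℕ // IsAdmissible n l ∧ EndsWithAscent l}

def appendAboveLastEquiv (k : ℕ) : Admissible k ≃ AdmissibleAsc (k + 1) where
  toFun s := ⟨appendAboveLast s, isAdmissible_appendAboveLast s.2⟩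
  invFun t := ⟨dropLastStd t, isAdmissible_dropLastStd t.2.1⟩
  left_inv s := Subtype.ext (dropLastStd_appendAboveLast s)
  right_inv t := Subtype.ext (appendAboveLast_dropLastStd t.2.1 t.2.2)

def joinAtMinMap (n : ℕ) :
    (Σ j : Fin (n + 1), AdmissibleAsc j × Admissible (n - j)) → Admissible (n + 1)
  | ⟨j, A, B⟩ => ⟨joinAtMin A B, by
      simpa [Nat.add_sub_cancel' (Nat.le_of_lt_succ j.2)] using
        isAdmissible_joinAtMin A.2.1 A.2.2 B.2⟩

lemma joinAtMinMap_bijective (n : ℕ) : Function.Bijective (joinAtMinMap n) := by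
  constructor
  · rintro ⟨j₁, A₁, B₁⟩ ⟨j₂, A₂, B₂⟩ h
    obtain ⟨hA, hB⟩ := joinAtMin_inj (congrArg Subtype.val h)
    obtain rfl : j₁ = j₂ := Fin.ext <| by
      rw [← (perm_range_iff.mp A₁.2.1.1).2.1, ← (perm_range_iff.mp A₂.2.1.1).2.1, hA]
    rw [Subtype.ext hA, Subtype.ext hB]
  · rintro ⟨l, hl⟩
    obtain ⟨A, B, hA, hA', hB, rfl⟩ := exists_joinAtMin_eq hl
    have hlen : A.length + B.length = n := by
      have := (perm_range_iff.mp hl.1).2.1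
      simp only [joinAtMin, List.length_append, List.length_map, List.length_cons] at this
      omega
    have hB' : IsAdmissible (n - A.length) B := by rwa [show n - A.length = B.length by omega]
    exact ⟨⟨⟨A.length, by omega⟩, ⟨A, hA, hA'⟩, ⟨B, hB'⟩⟩, rfl⟩

lemma finite_setOf_perm_range (n : ℕ) : {l : List ℕ | l ~ List.range n}.Finite :=
  (List.range n).permutations.finite_toSet.subset fun _ hl => List.mem_permutations.mpr hl

instance (n : ℕ) : Finite (Admissible n) :=
  ((finite_setOf_perm_range n).subset fun _ hl => hl.1).to_subtype

instance (n : ℕ) : Finite (AdmissibleAsc n) :=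
  ((finite_setOf_perm_range n).subset fun _ hl => hl.1.1).to_subtype

lemma isAdmissible_nil : IsAdmissible 0 [] ∧ EndsWithAscent [] :=
  ⟨⟨List.Perm.refl _, fun _ _ _ _ _ hk => absurd hk (Nat.not_lt_zero _),
    fun _ hi => absurd hi (Nat.not_lt_zero _)⟩, fun _ hi => absurd hi (by simp)⟩

lemma card_admissibleAsc_zero : Nat.card (AdmissibleAsc 0) = 1 :=
  Nat.card_eq_one_iff_exists.mpr ⟨⟨[], isAdmissible_nil⟩, fun l => Subtype.ext l.2.1.1.eq_nil⟩

lemma card_admissible_zero : Nat.card (Admissible 0) = 1 :=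
  Nat.card_eq_one_iff_exists.mpr ⟨⟨[], isAdmissible_nil.1⟩, fun l => Subtype.ext l.2.1.eq_nil⟩

lemma motzkin_succ (n : ℕ) :
    motzkin (n + 1) = motzkin n + ∑ k ∈ Finset.range n, motzkin k * motzkin (n - 1 - k) := by
  rw [motzkin, Finset.sum_attach (Finset.range n) fun k => motzkin k * motzkin (n - 1 - k)]

lemma card_admissible (n : ℕ) : Nat.card (Admissible n) = motzkin n := by
  induction n using Nat.strong_induction_on with
  | _ n ih =>
  rcases n with _ | n
  · rw [card_admissible_zero, motzkin]
  rw [← Nat.card_eq_of_bijective _ (joinAtMinMap_bijective n), Nat.card_sigma, Fin.sum_univ_succ,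
    motzkin_succ, ← Fin.sum_univ_eq_sum_range]
  simp only [Nat.card_prod, Fin.val_zero, Fin.val_succ, card_admissibleAsc_zero,
    ← Nat.card_congr (appendAboveLastEquiv _)]
  rw [one_mul, Nat.sub_zero, ih n n.lt_succ_self]
  congr 1
  refine Finset.sum_congr rfl fun k _ => ?_
  rw [ih k (by omega), ih _ (by omega), show n - (k + 1) = n - 1 - k by omega]

section Word

variable {n : ℕ} (π : Equiv.Perm (Fin n))

def word : List ℕ := List.ofFn fun i => (π i : ℕ)

@[simp] lemma length_word : (word π).length = n := List.length_ofFn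

lemma entry_word {i : ℕ} (h : i < n) : entry (word π) i = π ⟨i, h⟩ := by
  rw [entry_eq_getElem (by simpa using h)]
  simp [word]

lemma word_perm_range : word π ~ List.range n :=
  perm_range_iff.mpr ⟨List.nodup_ofFn.mpr fun _ _ h => π.injective (Fin.ext h), by simp,
    fun x hx => by obtain ⟨i, rfl⟩ := List.mem_ofFn.mp hx; exact (π i).2⟩

lemma avoids213_word_iff : Avoids213 (word π) ↔ ¬ Contains213 π := by
  constructor
  · rintro h ⟨a, b, c, hab, hbc, hba, hac⟩
    refine h a b c hab hbc (by simp) ?_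
    rw [entry_word π a.2, entry_word π b.2, entry_word π c.2]
    exact ⟨hba, hac⟩
  · intro h i j k hij hjk hk hc
    simp only [length_word] at hk
    rw [entry_word π (by omega), entry_word π (by omega), entry_word π hk] at hc
    exact h ⟨_, _, _, Fin.mk_lt_mk.mpr hij, Fin.mk_lt_mk.mpr hjk, hc.1, hc.2⟩

lemma noDoubleDescent_word_iff : NoDoubleDescent (word π) ↔
    ∀ a b c : Fin n, (b : ℕ) = a + 1 → (c : ℕ) = b + 1 → ¬ (π c < π b ∧ π b < π a) := by
  constructor
  · rintro h ⟨a, ha⟩ ⟨b, hb⟩ ⟨c, hc⟩ (rfl : b = a + 1) (rfl : c = a + 1 + 1)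
    have := h a (by simpa using hc)
    rwa [entry_word π ha, entry_word π hb, entry_word π hc] at this
  · intro h i hi
    simp only [length_word] at hi
    rw [entry_word π hi, entry_word π (by omega), entry_word π (by omega)]
    exact h ⟨i, by omega⟩ ⟨i + 1, by omega⟩ ⟨i + 2, hi⟩ rfl rfl

end Word

section Simsun

variable {n : ℕ} {π : Equiv.Perm (Fin n)}

lemma IsSimsun.noDoubleDescent_word (h : IsSimsun π) : NoDoubleDescent (word π) := by
  refine (noDoubleDescent_word_iff π).mpr fun a b c hb hc hdesc =>
    h n ⟨a, b, c, Fin.lt_def.mpr (by omega), Fin.lt_def.mpr (by omega), (π a).2, (π b).2, (π c).2,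
      fun m h₁ h₂ => ?_, fun m h₁ h₂ => ?_, hdesc.1, hdesc.2⟩
  all_goals rw [Fin.lt_def] at h₁ h₂; omega

/-- A gap after the middle entry of a double descent in the subword of values `< k` would
create a 213, and a gap before it can be closed up, so only consecutive double descents
matter. -/
lemma isSimsun_of_noDoubleDescent_word (hC : ¬ Contains213 π) (h : NoDoubleDescent (word π)) :
    IsSimsun π := by
  rw [noDoubleDescent_word_iff] at h
  rintro k ⟨a, b, c, hab, hbc, hak, -, -, hgap₁, hgap₂, hcb, hba⟩
  rw [Fin.lt_def] at hab hbc
  have hc : (c : ℕ) = b + 1 := by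
    by_contra hne
    have hm := hgap₂ ⟨b + 1, by omega⟩ (Fin.lt_def.mpr (by simp))
      (Fin.lt_def.mpr (by simp; omega))
    exact hC ⟨a, b, ⟨b + 1, by omega⟩, Fin.lt_def.mpr hab, Fin.lt_def.mpr (by simp),
      hba, Fin.lt_def.mpr (by omega)⟩
  rcases Nat.lt_or_ge (a + 1) b with hgap | hb
  · have hm := hgap₁ ⟨b - 1, by omega⟩ (Fin.lt_def.mpr (by simp; omega))
      (Fin.lt_def.mpr (by simp; omega))
    exact h ⟨b - 1, by omega⟩ b c (by simp; omega) hc ⟨hcb, Fin.lt_def.mpr (by omega)⟩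
  · exact h a b c (by omega) hc ⟨hcb, hba⟩

lemma exists_word_eq {l : List ℕ} (hl : l ~ List.range n) :
    ∃ π : Equiv.Perm (Fin n), word π = l := by
  obtain ⟨hnd, hlen, hlt⟩ := perm_range_iff.mp hl
  let f (i : Fin n) : Fin n := ⟨entry l i, hlt _ (entry_mem (by omega))⟩
  have hf : Function.Injective f := fun i j hij =>
    Fin.ext (entry_injective hnd (by omega) (by omega) (congrArg Fin.val hij))
  refine ⟨Equiv.ofBijective f (Finite.injective_iff_bijective.mp hf),
    List.ext_getElem (by simp [hlen]) fun i hi hi' => ?_⟩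
  rw [← entry_eq_getElem hi, ← entry_eq_getElem hi', entry_word _ (by simpa using hi)]
  rfl

def wordMap (n : ℕ) :
    {π : Equiv.Perm (Fin n) // IsSimsun π ∧ ¬ Contains213 π} → Admissible n :=
  fun π => ⟨word π.1, word_perm_range π.1, (avoids213_word_iff π.1).mpr π.2.2,
    IsSimsun.noDoubleDescent_word π.2.1⟩

lemma wordMap_bijective (n : ℕ) : Function.Bijective (wordMap n) := by
  refine ⟨fun π σ h => ?_, fun ⟨l, hperm, h213, hdd⟩ => ?_⟩
  · have := List.ofFn_injective (congrArg Subtype.val h)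
    exact Subtype.ext (Equiv.ext fun i => Fin.ext (congrFun this i))
  · obtain ⟨π, rfl⟩ := exists_word_eq hperm
    have hC := (avoids213_word_iff π).mp h213
    exact ⟨⟨π, isSimsun_of_noDoubleDescent_word hC hdd, hC⟩, rfl⟩

end Simsun

end SimsunAvoid213

/-- The number of simsun permutations of `{1, …, n}` avoiding the pattern 213
equals the Motzkin number `M n`. -/
theorem simsun_avoid213_count (n : ℕ) :
    Nat.card {π : Equiv.Perm (Fin n) // IsSimsun π ∧ ¬ Contains213 π} = motzkin n := by
  rw [Nat.card_eq_of_bijective _ (SimsunAvoid213.wordMap_bijective n),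
    SimsunAvoid213.card_admissible]
end

section
/- For every n ≥ 0, a permutation of {1,…,n} avoiding the pattern 213 is simsun if and only if it has no double descent. Equivalently, the set of simsun permutations of {1,…,n} avoiding 213 equals the set of permutations of {1,…,n} avoiding both the pattern 213 and the generalized pattern 3̂2̂1̂. -/
/-! A double descent is a double descent of the subword of all entries, so simsun permutations
have none. Conversely, let `π a > π b > π c` be consecutive in the subword of entries `< k`.
An entry between `b` and `c` would be `≥ k > π a` and complete a 213 with `a, b`, so `c = b + 1`
when `π` avoids 213; and the entry just before `b` is either `π a` or `≥ k`, hence exceeds `π b`.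
These three adjacent entries form a double descent of `π`. -/

section

variable {n : ℕ} {π : Equiv.Perm (Fin n)}

theorem hasDoubleDescent_of_val_succ {a b c : Fin n} (hab : (b : ℕ) = a + 1)
    (hbc : (c : ℕ) = b + 1) (hcb : π c < π b) (hba : π b < π a) : HasDoubleDescent π := by
  obtain ⟨a, ha⟩ := a
  obtain ⟨b, hb⟩ := b
  obtain ⟨c, hc⟩ := c
  simp only at hab hbc
  subst hab hbc
  exact ⟨a, hc, hcb, hba⟩

theorem isSimsun_of_not_contains213_of_not_hasDoubleDescent (h213 : ¬ Contains213 π)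
    (hdd : ¬ HasDoubleDescent π) : IsSimsun π := by
  rintro k ⟨a, b, c, hab, hbc, hak, hbk, -, gap_ab, gap_bc, hcb, hba⟩
  rw [Fin.lt_def] at hab hbc
  have hc : (c : ℕ) = b + 1 := by
    by_contra hne
    let m : Fin n := ⟨b + 1, by omega⟩
    have hbm : b < m := Fin.lt_def.2 (Nat.lt_succ_self _)
    have hmc : m < c := Fin.lt_def.2 (by simp only [m]; omega)
    exact h213 ⟨a, b, m, Fin.lt_def.2 hab, hbm, hba, hak.trans_le (gap_bc m hbm hmc)⟩
  let p : Fin n := ⟨b - 1, by omega⟩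
  have hbp : π b < π p := by
    rcases (show a ≤ p from Fin.le_def.2 (by simp only [p]; omega)).eq_or_lt with hap | hap
    · exact hap ▸ hba
    · exact Fin.lt_def.2 <| hbk.trans_le (gap_ab p hap (Fin.lt_def.2 (by simp only [p]; omega)))
  exact hdd (hasDoubleDescent_of_val_succ (a := p) (by simp only [p]; omega) hc hcb hbp)

theorem isSimsun_iff_not_hasDoubleDescent (h213 : ¬ Contains213 π) :
    IsSimsun π ↔ ¬ HasDoubleDescent π :=
  ⟨IsSimsun.not_hasDoubleDescent, isSimsun_of_not_contains213_of_not_hasDoubleDescent h213⟩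

end

/-- A 213-avoiding permutation is simsun if and only if it has no double
descent; equivalently, the simsun permutations avoiding 213 are exactly the
permutations avoiding both 213 and the generalized pattern 3̂2̂1̂. -/
theorem simsun_iff_noDoubleDescent_of_avoids213 (n : ℕ) :
    (∀ π : Equiv.Perm (Fin n), ¬ Contains213 π →
        (IsSimsun π ↔ ¬ HasDoubleDescent π)) ∧
      {π : Equiv.Perm (Fin n) | IsSimsun π ∧ ¬ Contains213 π} =
        {π : Equiv.Perm (Fin n) | ¬ Contains213 π ∧ ¬ HasDoubleDescent π} := by
  refine ⟨fun π => isSimsun_iff_not_hasDoubleDescent, Set.ext fun π => ?_⟩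
  simp only [Set.mem_ofPred_eq]
  exact ⟨fun ⟨hs, h213⟩ => ⟨h213, (isSimsun_iff_not_hasDoubleDescent h213).1 hs⟩,
    fun ⟨h213, hdd⟩ => ⟨(isSimsun_iff_not_hasDoubleDescent h213).2 hdd, h213⟩⟩
end

section
/- For every n ≥ 1, the number of sequences (a_1, a_2, …, a_n) of nonnegative integers with a_1 = 1 and such that for every i with 1 ≤ i ≤ n−1, either a_{i+1} = a_i + 1 or 0 ≤ a_{i+1} < a_i, equals the Motzkin number M_n. -/
/-!
Read a sequence as the walk `0, a₁, …, aₙ` whose steps go up by one or down to any smaller value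
(the forced first step `0 → 1` is the condition `a₁ = 1`). After its first step such a walk is a
walk from `1`; cut that at its first visit to `0`, if any, and lower the part before the cut by
one. This identifies walks of length `n + 2` from `0` with either a walk of length `n + 1`, or a
pair of walks of lengths `k` and `n - k`, all from `0`: the Motzkin recurrence.
-/

theorem List.append_cons_inj_of_notMem_left {α : Type*} {a : α} {s₁ s₂ t₁ t₂ : List α}
    (h₁ : a ∉ s₁) (h₂ : a ∉ s₂) (h : s₁ ++ a :: t₁ = s₂ ++ a :: t₂) : s₁ = s₂ ∧ t₁ = t₂ := by
  induction s₁ generalizing s₂ with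
  | nil => cases s₂ <;> simp_all
  | cons x s₁ ih => cases s₂ <;> grind

theorem List.exists_map_succ_eq_of_zero_notMem {l : List ℕ} (hl : 0 ∉ l) :
    ∃ l' : List ℕ, l'.map (· + 1) = l := by
  rw [← Set.mem_range, Set.range_list_map]
  exact fun x hx => ⟨x - 1, by grind⟩

noncomputable def List.ofFnEquivSubtype {α : Type*} (n : ℕ) (P : List α → Prop) :
    {a : Fin n → α // P (List.ofFn a)} ≃ {l : List α // P l ∧ l.length = n} :=
  Equiv.ofBijective (fun a => ⟨List.ofFn a.1, a.2, List.length_ofFn⟩) <| by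
    refine ⟨fun a b h => Subtype.ext (List.ofFn_injective (congrArg Subtype.val h)), ?_⟩
    rintro ⟨l, hl, rfl⟩
    exact ⟨⟨fun i => l[(i : ℕ)], by rwa [List.ofFn_getElem]⟩, Subtype.ext List.ofFn_getElem⟩

def MotzkinStep (a b : ℕ) : Prop := b = a + 1 ∨ b < a

theorem motzkinStep_succ_succ {a b : ℕ} : MotzkinStep (a + 1) (b + 1) ↔ MotzkinStep a b := by
  unfold MotzkinStep; omega

theorem motzkinStep_zero_left {b : ℕ} : MotzkinStep 0 b ↔ b = 1 := by
  unfold MotzkinStep; omega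

theorem motzkinStep_zero_right {a : ℕ} : MotzkinStep a 0 ↔ a ≠ 0 := by
  unfold MotzkinStep; omega

theorem isChain_motzkinStep_map_succ {v : ℕ} {l : List ℕ} :
    List.IsChain MotzkinStep ((v + 1) :: l.map (· + 1)) ↔ List.IsChain MotzkinStep (v :: l) := by
  rw [List.isChain_cons_map (· + 1)]
  simp only [motzkinStep_succ_succ]

theorem isChain_motzkinStep_append_zero {l : List ℕ} (hl : 0 ∉ l) :
    List.IsChain MotzkinStep (l ++ [0]) ↔ List.IsChain MotzkinStep l := by
  simp only [List.isChain_append, List.IsChain.singleton, List.head?_cons, Option.mem_some_iff,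
    forall_eq', true_and, and_iff_left_iff_imp]
  exact fun _ x hx => motzkinStep_zero_right.2 fun hx0 => hl (hx0 ▸ List.mem_of_getLast? hx)

theorem isChain_motzkinStep_one_cons_map_succ_append_zero_cons {A q : List ℕ} :
    List.IsChain MotzkinStep (1 :: (A.map (· + 1) ++ 0 :: q)) ↔
      List.IsChain MotzkinStep (0 :: A) ∧ List.IsChain MotzkinStep (0 :: q) := by
  rw [List.isChain_cons_split, ← List.cons_append, isChain_motzkinStep_append_zero (by simp),
    isChain_motzkinStep_map_succ]

theorem isChain_motzkinStep_zero_cons_ofFn {n : ℕ} (hn : 1 ≤ n) (a : Fin n → ℕ) :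
    List.IsChain MotzkinStep (0 :: List.ofFn a) ↔
      a ⟨0, hn⟩ = 1 ∧
        ∀ (i : ℕ) (h : i + 1 < n), MotzkinStep (a ⟨i, Nat.lt_of_succ_lt h⟩) (a ⟨i + 1, h⟩) := by
  rw [List.isChain_cons, List.isChain_iff_getElem, List.head?_eq_getElem?]
  simp [motzkinStep_zero_left, show 0 < n from hn]

theorem motzkin_add_two (n : ℕ) :
    motzkin (n + 2) = motzkin (n + 1) + ∑ k : Fin (n + 1), motzkin k * motzkin (n - k) := by
  rw [motzkin,
    Finset.sum_attach (Finset.range (n + 1)) fun k => motzkin k * motzkin (n + 1 - 1 - k),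
    Fin.sum_univ_eq_sum_range (fun k => motzkin k * motzkin (n - k))]
  rfl

/-- Walks of `m` Motzkin steps from `v`; the list records the `m` positions after `v`. -/
def MotzkinPath (v m : ℕ) : Type :=
  {l : List ℕ // List.IsChain MotzkinStep (v :: l) ∧ l.length = m}

namespace MotzkinPath

variable {v m : ℕ}

instance : Unique (MotzkinPath v 0) where
  default := ⟨[], List.IsChain.singleton v, rfl⟩
  uniq p := Subtype.ext (List.length_eq_zero_iff.1 p.2.2)

def shift (p : MotzkinPath v m) : MotzkinPath (v + 1) m :=
  ⟨p.1.map (· + 1), isChain_motzkinStep_map_succ.2 p.2.1, by simp [p.2.2]⟩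

theorem shift_injective : Function.Injective (@shift v m) :=
  fun _ _ h =>
    Subtype.ext (List.map_injective_iff.2 (add_left_injective 1) (congrArg Subtype.val h))

theorem zero_notMem_shift (p : MotzkinPath v m) : 0 ∉ (shift p).1 := by
  simp [shift]

theorem exists_shift_eq (p : MotzkinPath (v + 1) m) (hp : 0 ∉ p.1) :
    ∃ p' : MotzkinPath v m, shift p' = p := by
  obtain ⟨l, hl⟩ := List.exists_map_succ_eq_of_zero_notMem hp
  have hc := p.2.1
  rw [← hl, isChain_motzkinStep_map_succ] at hc
  exact ⟨⟨l, hc, by simpa [← hl] using p.2.2⟩, Subtype.ext hl⟩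

theorem eq_one_cons_tail (p : MotzkinPath 0 (m + 1)) : p.1 = 1 :: p.1.tail := by
  obtain ⟨_ | ⟨b, t⟩, hc, hl⟩ := p
  · simp at hl
  · rw [List.isChain_cons_cons, motzkinStep_zero_left] at hc
    simp [hc.1]

def consOneEquiv (m : ℕ) : MotzkinPath 1 m ≃ MotzkinPath 0 (m + 1) where
  toFun p := ⟨1 :: p.1, by simpa [motzkinStep_zero_left] using p.2.1, by simp [p.2.2]⟩
  invFun p := ⟨p.1.tail, (List.isChain_cons_cons.1 (eq_one_cons_tail p ▸ p.2.1)).2,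
    by simp [p.2.2]⟩
  left_inv p := rfl
  right_inv p := Subtype.ext (eq_one_cons_tail p).symm

/-- Inverse of cutting a path from `1` at its first visit to `0`, if any. -/
def joinAtZero (n : ℕ) :
    MotzkinPath 0 (n + 1) ⊕ (Σ k : Fin (n + 1), MotzkinPath 0 k × MotzkinPath 0 (n - k)) →
      MotzkinPath 1 (n + 1)
  | .inl p => shift p
  | .inr ⟨k, p, q⟩ =>
    ⟨(shift p).1 ++ 0 :: q.1,
      isChain_motzkinStep_one_cons_map_succ_append_zero_cons.2 ⟨p.2.1, q.2.1⟩,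
      by simp [shift, p.2.2, q.2.2]; omega⟩

theorem joinAtZero_injective (n : ℕ) : Function.Injective (joinAtZero n) := by
  rintro (p | ⟨k, p, q⟩) (p' | ⟨k', p', q'⟩) h
  · exact congrArg Sum.inl (shift_injective h)
  · exact absurd (congrArg Subtype.val h ▸ List.mem_append_cons_self) (zero_notMem_shift p)
  · exact absurd (congrArg Subtype.val h ▸ List.mem_append_cons_self) (zero_notMem_shift p')
  · obtain ⟨hp, hq⟩ := List.append_cons_inj_of_notMem_left (zero_notMem_shift p)
      (zero_notMem_shift p') (congrArg Subtype.val h)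
    obtain rfl : k = k' := Fin.ext (by simpa [shift, p.2.2, p'.2.2] using congrArg List.length hp)
    obtain rfl := shift_injective (Subtype.ext hp)
    obtain rfl : q = q' := Subtype.ext hq
    rfl

theorem joinAtZero_surjective (n : ℕ) : Function.Surjective (joinAtZero n) := by
  intro r
  by_cases hr : 0 ∈ r.1
  · obtain ⟨s, t, hst, hs⟩ := List.eq_append_cons_of_mem hr
    obtain ⟨A, rfl⟩ := List.exists_map_succ_eq_of_zero_notMem hs
    have hc := r.2.1
    have hlen := r.2.2
    rw [hst, isChain_motzkinStep_one_cons_map_succ_append_zero_cons] at hc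
    rw [hst] at hlen
    simp only [List.length_append, List.length_map, List.length_cons] at hlen
    refine ⟨.inr ⟨⟨A.length, by omega⟩, ⟨A, hc.1, rfl⟩, ⟨t, hc.2, ?_⟩⟩, Subtype.ext hst.symm⟩
    change t.length = n - A.length
    omega
  · obtain ⟨p, rfl⟩ := exists_shift_eq r hr
    exact ⟨.inl p, rfl⟩

noncomputable def addTwoEquiv (n : ℕ) : MotzkinPath 0 (n + 2) ≃
    MotzkinPath 0 (n + 1) ⊕ (Σ k : Fin (n + 1), MotzkinPath 0 k × MotzkinPath 0 (n - k)) :=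
  (consOneEquiv (n + 1)).symm.trans
    (Equiv.ofBijective _ ⟨joinAtZero_injective n, joinAtZero_surjective n⟩).symm

instance finite_zero (m : ℕ) : Finite (MotzkinPath 0 m) := by
  induction m using Nat.strong_induction_on with
  | _ m ih =>
    match m, ih with
    | 0, _ => infer_instance
    | 1, _ => exact Finite.of_equiv _ (consOneEquiv 0)
    | n + 2, ih =>
      have := ih (n + 1) (by omega)
      have := fun k : Fin (n + 1) => ih k (by omega)
      have := fun k : Fin (n + 1) => ih (n - k) (by omega)
      exact Finite.of_equiv _ (addTwoEquiv n).symm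

theorem card_zero (m : ℕ) : Nat.card (MotzkinPath 0 m) = motzkin m := by
  induction m using Nat.strong_induction_on with
  | _ m ih =>
    match m, ih with
    | 0, _ => simp [motzkin]
    | 1, _ => simp [← Nat.card_congr (consOneEquiv 0), motzkin]
    | n + 2, ih =>
      rw [Nat.card_congr (addTwoEquiv n), Nat.card_sum, Nat.card_sigma, motzkin_add_two,
        ih (n + 1) (by omega)]
      congr 1
      refine Finset.sum_congr rfl fun k _ => ?_
      rw [Nat.card_prod, ih k (by omega), ih (n - k) (by omega)]

end MotzkinPath

/-- For `n ≥ 1`, the number of sequences `(a 1, …, a n)` of nonnegative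
integers with `a 1 = 1` and, for each `i`, either `a (i+1) = a i + 1` or
`a (i+1) < a i`, equals the Motzkin number `M n`.  (Sequences are indexed
0-based by `Fin n`.) -/
theorem motzkin_sequences_count (n : ℕ) (hn : 1 ≤ n) :
    Nat.card {a : Fin n → ℕ //
      a ⟨0, by omega⟩ = 1 ∧
      ∀ (i : ℕ) (h : i + 1 < n),
        a ⟨i + 1, h⟩ = a ⟨i, by omega⟩ + 1 ∨ a ⟨i + 1, h⟩ < a ⟨i, by omega⟩} =
      motzkin n := by
  rw [← MotzkinPath.card_zero n]
  exact Nat.card_congr <|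
    (Equiv.subtypeEquivRight fun a => (isChain_motzkinStep_zero_cons_ofFn hn a).symm).trans
      (List.ofFnEquivSubtype n fun l => List.IsChain MotzkinStep (0 :: l))
end

section
/- For every n ≥ 0 and every permutation π of {1,…,n} avoiding the pattern 231, the following are equivalent: (i) π is simsun; (ii) π has no double descent (no index i with π_i > π_{i+1} > π_{i+2}); (iii) π avoids the generalized pattern 3̂2̂1 (there is no pair of indices i, j with i+1 < j and π_i > π_{i+1} > π_j). -/
/-- `π` contains the pattern 231. -/
def Contains231 {n : ℕ} (π : Equiv.Perm (Fin n)) : Prop :=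
  ∃ a b c : Fin n, a < b ∧ b < c ∧ π c < π a ∧ π a < π b

/-! In a 231-avoiding permutation, an entry lying between two positions `a < b` with
`π b < π a` is itself smaller than `π a`. Hence when `π a > π b` are consecutive in the
subword of entries `< k`, nothing lies between them at all: they are adjacent in `π`.
So a double descent of any such subword is a double descent of `π`. Likewise, in an
occurrence `π i > π (i+1) > π j` of 3̂2̂1 the entry `π (i+2)` is below `π (i+1)`. -/

section

variable {n : ℕ} {π : Equiv.Perm (Fin n)}

theorem lt_of_not_contains231 (h231 : ¬ Contains231 π) {a m b : Fin n} (ham : a < m)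
    (hmb : m < b) (hba : π b < π a) : π m < π a := by
  refine lt_of_le_of_ne (not_lt.mp fun hma => h231 ⟨a, m, b, ham, hmb, hba, hma⟩) ?_
  exact π.injective.ne ham.ne'

theorem val_eq_succ_of_forall_between_ge (h231 : ¬ Contains231 π) {k : ℕ} {a b : Fin n}
    (hab : a < b) (hba : π b < π a) (hak : (π a : ℕ) < k)
    (between : ∀ m : Fin n, a < m → m < b → k ≤ (π m : ℕ)) : (b : ℕ) = a + 1 := by
  by_contra hne
  have hab' : (a : ℕ) < b := hab
  let m : Fin n := ⟨a + 1, by omega⟩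
  have ham : a < m := Fin.lt_def.mpr (Nat.lt_succ_self _)
  have hmb : m < b := Fin.lt_def.mpr (by simp only [m]; omega)
  have hma : (π m : ℕ) < π a := lt_of_not_contains231 h231 ham hmb hba
  have hkm : k ≤ (π m : ℕ) := between m ham hmb
  omega

theorem hasDoubleDescent_of_val_eq {a b c : Fin n} (hb : (b : ℕ) = a + 1)
    (hc : (c : ℕ) = b + 1) (hcb : π c < π b) (hba : π b < π a) : HasDoubleDescent π := by
  obtain ⟨a, ha⟩ := a
  obtain ⟨b, hb'⟩ := b
  obtain ⟨c, hc'⟩ := c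
  simp only at hb hc
  subst hb hc
  exact ⟨a, hc', hcb, hba⟩

theorem HasDoubleDescent.not_isSimsun (h : HasDoubleDescent π) : ¬ IsSimsun π := by
  obtain ⟨i, hi, hcb, hba⟩ := h
  refine fun hs => hs n ⟨⟨i, by omega⟩, ⟨i + 1, by omega⟩, ⟨i + 2, hi⟩, ?_, ?_,
    (π _).isLt, (π _).isLt, (π _).isLt, ?_, ?_, hcb, hba⟩ <;>
    simp only [Fin.lt_def] <;> omega

theorem HasDoubleDescent.contains32hat1 (h : HasDoubleDescent π) : Contains32hat1 π := by
  obtain ⟨i, hi, hcb, hba⟩ := h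
  exact ⟨i, i + 2, hi, by omega, hcb, hba⟩

theorem hasDoubleDescent_of_not_isSimsun (h231 : ¬ Contains231 π) (h : ¬ IsSimsun π) :
    HasDoubleDescent π := by
  simp only [IsSimsun, not_forall, not_not] at h
  obtain ⟨k, a, b, c, hab, hbc, hak, hbk, -, between_ab, between_bc, hcb, hba⟩ := h
  exact hasDoubleDescent_of_val_eq
    (val_eq_succ_of_forall_between_ge h231 hab hba hak between_ab)
    (val_eq_succ_of_forall_between_ge h231 hbc hcb hbk between_bc) hcb hba

theorem hasDoubleDescent_of_contains32hat1 (h231 : ¬ Contains231 π) (h : Contains32hat1 π) :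
    HasDoubleDescent π := by
  obtain ⟨i, j, hj, hij, hjb, hba⟩ := h
  obtain rfl | hij' := (show i + 2 ≤ j by omega).eq_or_lt
  · exact ⟨i, hj, hjb, hba⟩
  · have hcb : π ⟨i + 2, by omega⟩ < π ⟨i + 1, by omega⟩ :=
      lt_of_not_contains231 h231 (Fin.lt_def.mpr (by simp)) (Fin.lt_def.mpr hij') hjb
    exact ⟨i, by omega, hcb, hba⟩

end

/-- For a 231-avoiding permutation `π`, the following are equivalent:
(i) `π` is simsun; (ii) `π` has no double descent; (iii) `π` avoids the
generalized pattern 3̂2̂1. -/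
theorem simsun_tfae_of_avoids231 (n : ℕ) (π : Equiv.Perm (Fin n))
    (h231 : ¬ Contains231 π) :
    (IsSimsun π ↔ ¬ HasDoubleDescent π) ∧
      (IsSimsun π ↔ ¬ Contains32hat1 π) := by
  have simsun_iff : IsSimsun π ↔ ¬ HasDoubleDescent π :=
    ⟨fun hs hd => hd.not_isSimsun hs,
      fun hd => by_contra fun hs => hd (hasDoubleDescent_of_not_isSimsun h231 hs)⟩
  have doubleDescent_iff : HasDoubleDescent π ↔ Contains32hat1 π :=
    ⟨HasDoubleDescent.contains32hat1, hasDoubleDescent_of_contains32hat1 h231⟩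
  exact ⟨simsun_iff, simsun_iff.trans (not_congr doubleDescent_iff)⟩
end

section
/- For every n ≥ 1, the number of simsun permutations of {1,…,n} that avoid the pattern 312 equals 2^{n−1}. -/
/-- `π` contains the pattern 312. -/
def Contains312 {n : ℕ} (π : Equiv.Perm (Fin n)) : Prop :=
  ∃ a b c : Fin n, a < b ∧ b < c ∧ π b < π c ∧ π c < π a

/-!
An entry of a simsun, 312-avoiding permutation has at most one smaller entry to its right: the
first two such entries would form either a 312 or, together with the entry itself, a double
descent of the subword of the entries up to it; conversely this condition rules out both.
By pigeonhole it is equivalent to `π i ≤ i + 1` for all (0-based) positions `i`. Removing the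
first entry (`Equiv.Perm.decomposeFin`) shows that such permutations are exactly the ones with
`π 0 ∈ {0, 1}` and a permutation of the same kind on the remaining positions, whence `2 ^ (n - 1)`.
-/

open Finset

namespace Equiv.Perm

variable {n : ℕ}

def HasTwoSmallerAfter (π : Perm (Fin n)) (a : Fin n) : Prop :=
  ∃ b c, a < b ∧ b < c ∧ π b < π a ∧ π c < π a

def BoundedBySucc (π : Perm (Fin n)) : Prop :=
  ∀ i : Fin n, (π i : ℕ) ≤ i + 1

lemma card_filter_apply_lt (π : Perm (Fin n)) (v : Fin n) :
    #{p | π p < v} = v := by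
  rw [← Fin.card_Iio v]
  exact card_equiv π (by simp)

lemma HasTwoSmallerAfter.exists_first {π : Perm (Fin n)} {a : Fin n}
    (h : π.HasTwoSmallerAfter a) :
    ∃ b c, a < b ∧ b < c ∧ π b < π a ∧ π c < π a ∧
      (∀ m, a < m → m < b → π a < π m) ∧ (∀ m, b < m → m < c → π a < π m) := by
  obtain ⟨b₀, c₀, hab₀, hbc₀, hb₀, hc₀⟩ := h
  set S : Finset (Fin n) := {p | a < p ∧ π p < π a} with hS
  have hb₀S : b₀ ∈ S := by simp [hS, hab₀, hb₀]
  set b := S.min' ⟨b₀, hb₀S⟩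
  have hbS : b ∈ S := S.min'_mem _
  have hc₀T : c₀ ∈ S.filter (b < ·) :=
    mem_filter.2 ⟨by simp [hS, hab₀.trans hbc₀, hc₀], (S.min'_le _ hb₀S).trans_lt hbc₀⟩
  set c := (S.filter (b < ·)).min' ⟨c₀, hc₀T⟩
  have hcT : c ∈ S.filter (b < ·) := min'_mem _ _
  simp only [hS, mem_filter, mem_univ, true_and] at hbS hcT
  refine ⟨b, c, hbS.1, hcT.2, hbS.2, hcT.1.2, fun m ham hmb => ?_, fun m hbm hmc => ?_⟩
  · refine (lt_or_gt_of_ne (π.injective.ne ham.ne')).resolve_left fun hm => ?_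
    exact (S.min'_le m (by simp [hS, ham, hm])).not_gt hmb
  · refine (lt_or_gt_of_ne (π.injective.ne (hbS.1.trans hbm).ne')).resolve_left fun hm => ?_
    exact ((S.filter (b < ·)).min'_le m (by simp [hS, hbS.1.trans hbm, hm, hbm])).not_gt hmc

/-- If `b < c` are the first two entries smaller than `π a` to the right of `a`, then either
`π a, π b, π c` is a 312, or it is a double descent of the subword of entries `≤ π a`. -/
lemma isSimsun_and_not_contains312_iff (π : Perm (Fin n)) :
    IsSimsun π ∧ ¬ Contains312 π ↔ ∀ a, ¬ π.HasTwoSmallerAfter a := by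
  constructor
  · rintro ⟨hs, h312⟩ a h
    obtain ⟨b, c, hab, hbc, hb, hc, gap_ab, gap_bc⟩ := h.exists_first
    rcases lt_or_gt_of_ne (π.injective.ne hbc.ne) with hbc' | hcb
    · exact h312 ⟨a, b, c, hab, hbc, hbc', hc⟩
    · refine hs (π a + 1) ⟨a, b, c, hab, hbc, by omega, by omega, by omega,
        fun m h₁ h₂ => ?_, fun m h₁ h₂ => ?_, hcb, hb⟩
      · have := gap_ab m h₁ h₂; omega
      · have := gap_bc m h₁ h₂; omega
  · intro h
    refine ⟨fun k ⟨a, b, c, hab, hbc, _, _, _, _, _, hcb, hba⟩ => ?_,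
      fun ⟨a, b, c, hab, hbc, hbc', hca⟩ => h a ⟨b, c, hab, hbc, hbc'.trans hca, hca⟩⟩
    exact h a ⟨b, c, hab, hbc, hba, hcb.trans hba⟩

/-- Pigeonhole: the `a + 3` positions `0, …, a, b, c` would all carry values `≤ a + 1`. -/
lemma BoundedBySucc.not_hasTwoSmallerAfter {π : Perm (Fin n)} (h : π.BoundedBySucc)
    (a : Fin n) : ¬ π.HasTwoSmallerAfter a := by
  rintro ⟨b, c, hab, hbc, hb, hc⟩
  have hcard := card_le_card_of_injOn (fun p => (π p : ℕ))
    (s := insert b (insert c (Iic a))) (t := range (a + 2))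
    (fun p hp => by
      simp only [coe_insert, coe_Iic, Set.mem_insert_iff, Set.mem_Iic] at hp
      have := h a
      have := h p
      simp only [coe_range, Set.mem_Iio]
      rcases hp with rfl | rfl | hp <;> omega)
    (fun p _ q _ hpq => π.injective (Fin.ext hpq))
  rw [card_insert_of_notMem (by simp; omega), card_insert_of_notMem (by simp; omega),
    Fin.card_Iic, card_range] at hcard
  omega

/-- At most `a` of the `π a` smaller entries sit to the left of position `a`. -/
lemma hasTwoSmallerAfter_of_add_two_le {π : Perm (Fin n)} {a : Fin n}
    (ha : (a : ℕ) + 2 ≤ π a) : π.HasTwoSmallerAfter a := by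
  set S : Finset (Fin n) := {p | a < p ∧ π p < π a} with hS
  have hsub : ({p | π p < π a} : Finset (Fin n)) ⊆ Iio a ∪ S := by
    intro p hp
    simp only [hS, mem_filter, mem_univ, true_and, mem_union, mem_Iio] at hp ⊢
    rcases lt_trichotomy p a with hpa | rfl | hap
    · exact .inl hpa
    · exact (lt_irrefl _ hp).elim
    · exact .inr ⟨hap, hp⟩
  have hcard := (card_le_card hsub).trans (card_union_le _ _)
  rw [card_filter_apply_lt, Fin.card_Iio] at hcard
  obtain ⟨b, hb, c, hc, hbc⟩ := one_lt_card.1 (by omega : 1 < #S)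
  simp only [hS, mem_filter, mem_univ, true_and] at hb hc
  rcases lt_or_gt_of_ne hbc with hbc | hcb
  · exact ⟨b, c, hb.1, hbc, hb.2, hc.2⟩
  · exact ⟨c, b, hc.1, hcb, hc.2, hb.2⟩

lemma boundedBySucc_iff_forall_not_hasTwoSmallerAfter (π : Perm (Fin n)) :
    π.BoundedBySucc ↔ ∀ a, ¬ π.HasTwoSmallerAfter a :=
  ⟨BoundedBySucc.not_hasTwoSmallerAfter, fun h i => not_lt.1 fun hi =>
    h i (hasTwoSmallerAfter_of_add_two_le hi)⟩

lemma val_decomposeFin_symm_apply_succ (p : Fin (n + 1)) (e : Perm (Fin n)) (i : Fin n) :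
    (decomposeFin.symm (p, e) i.succ : ℕ) = if (e i).succ = p then 0 else (e i : ℕ) + 1 := by
  rw [decomposeFin_symm_apply_succ, swap_apply_def]
  split_ifs <;> simp_all

lemma boundedBySucc_decomposeFin_symm_iff (p : Fin (n + 1)) (e : Perm (Fin n)) :
    (decomposeFin.symm (p, e)).BoundedBySucc ↔ (p : ℕ) ≤ 1 ∧ e.BoundedBySucc := by
  refine ⟨fun h => ⟨by simpa using h 0, fun i => ?_⟩,
    fun ⟨hp, he⟩ => Fin.cases (by simpa) fun i => ?_⟩
  · have hi := h i.succ
    rw [val_decomposeFin_symm_apply_succ] at hi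
    split_ifs at hi with hep
    · have := h 0
      simp only [decomposeFin_symm_apply_zero, ← hep, Fin.val_succ, Fin.val_zero] at this
      omega
    · simp only [Fin.val_succ] at hi
      omega
  · have := he i
    rw [val_decomposeFin_symm_apply_succ, Fin.val_succ]
    split_ifs <;> omega

lemma card_boundedBySucc : ∀ n, Nat.card {π : Perm (Fin n) // π.BoundedBySucc} = 2 ^ (n - 1)
  | 0 | 1 => by
    rw [Nat.card_congr (subtypeUnivEquiv (p := BoundedBySucc) fun π i => by omega), Nat.card_perm]
    simp
  | n + 2 => by
    have hp : Nat.card {p : Fin (n + 2) // (p : ℕ) ≤ 1} = 2 := by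
      have : ({p | (p : ℕ) ≤ 1} : Finset (Fin (n + 2))) = Iic 1 := by ext; simp [Fin.le_def]
      rw [Nat.card_eq_fintype_card, Fintype.card_subtype, this, Fin.card_Iic]
      simp
    have e := (subtypeEquiv decomposeFin.symm fun x : Fin (n + 2) × Perm (Fin (n + 1)) =>
      (boundedBySucc_decomposeFin_symm_iff x.1 x.2).symm).symm.trans
      (subtypeProdEquivProd (p := fun p : Fin (n + 2) => (p : ℕ) ≤ 1) (q := BoundedBySucc))
    rw [Nat.card_congr e, Nat.card_prod, hp, card_boundedBySucc (n + 1)]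
    simp [pow_succ']

end Equiv.Perm

theorem simsun_avoid312_count_general (n : ℕ) :
    Nat.card {π : Equiv.Perm (Fin n) // IsSimsun π ∧ ¬ Contains312 π} =
      2 ^ (n - 1) := by
  simp only [Equiv.Perm.isSimsun_and_not_contains312_iff,
    ← Equiv.Perm.boundedBySucc_iff_forall_not_hasTwoSmallerAfter]
  exact Equiv.Perm.card_boundedBySucc n

/-- For `n ≥ 1`, the number of simsun permutations of `{1, …, n}` avoiding the
pattern 312 equals `2 ^ (n - 1)`. -/
theorem simsun_avoid312_count (n : ℕ) (hn : 1 ≤ n) :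
    Nat.card {π : Equiv.Perm (Fin n) // IsSimsun π ∧ ¬ Contains312 π} =
      2 ^ (n - 1) :=
  simsun_avoid312_count_general n
end

section
/- For every n ≥ 0 and every permutation π of {1,…,n} avoiding the pattern 312, the following are equivalent: (i) π is simsun; (ii) π avoids the pattern 321; (iii) π avoids the generalized pattern 3̂2̂1 (there is no pair of indices i, j with i+1 < j and π_i > π_{i+1} > π_j). -/
/-- `π` contains the pattern 321. -/
def Contains321 {n : ℕ} (π : Equiv.Perm (Fin n)) : Prop :=
  ∃ a b c : Fin n, a < b ∧ b < c ∧ π c < π b ∧ π b < π a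

/-! A double descent in a restricted subword is in particular a 321, so avoiding 321 implies
simsun. It remains to show, for 312-avoiding `π`, that a 321 yields a 3̂2̂1 and that a 3̂2̂1
violates simsun.
Given a 321 at values `π a > π b > π c`, walking from `a` to `b` there are adjacent positions
`i, i+1` with `π i > π b ≥ π (i+1)`; then `π (i+1) > π c`, since otherwise `i, i+1, c` is a 312.
Given a 3̂2̂1 at `i, i+1, j`, choose `j` to be the first position after `i+1` with a value below
`π (i+1)`; every entry strictly between `i+1` and `j` then exceeds `π (i+1)`, hence `π i` (else a
312), so `π i, π (i+1), π j` is a double descent in the subword of entries at most `π i`. -/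

theorem Fin.exists_adjacent_lt_and_le {n : ℕ} {α : Type*} [LinearOrder α] (f : Fin n → α)
    {t : α} {a : Fin n} (ha : t < f a) (b : Fin n) (hab : a ≤ b) (hb : f b ≤ t) :
    ∃ i j : Fin n, (j : ℕ) = i + 1 ∧ a ≤ i ∧ j ≤ b ∧ t < f i ∧ f j ≤ t := by
  obtain ⟨k, hk⟩ := b
  replace hab : (a : ℕ) < k := Fin.lt_def.mp (hab.lt_of_ne (by rintro rfl; exact hb.not_gt ha))
  induction k with
  | zero => omega
  | succ k ih =>
    by_cases hfk : t < f ⟨k, by omega⟩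
    · exact ⟨⟨k, by omega⟩, ⟨k + 1, hk⟩, rfl,
        Fin.le_def.mpr (by omega : (a : ℕ) ≤ k), le_rfl, hfk, hb⟩
    · have hak : (a : ℕ) ≠ k := fun h =>
        hfk (by rwa [show a = ⟨k, by omega⟩ from Fin.ext h] at ha)
      obtain ⟨i, j, hij, hai, hjk, hi, hj⟩ := ih (by omega) (not_lt.mp hfk) (by omega)
      exact ⟨i, j, hij, hai, hjk.trans (Fin.le_def.mpr (by simp)), hi, hj⟩

theorem exists_first_lt_of_lt {ι α : Type*} [LT ι] [WellFoundedLT ι] [LinearOrder α]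
    (f : ι → α) {b c : ι} (hbc : b < c) (hc : f c < f b) :
    ∃ c, b < c ∧ f c < f b ∧ ∀ m, b < m → m < c → f b ≤ f m := by
  obtain ⟨c₀, ⟨hbc₀, hc₀⟩, hmin⟩ :=
    wellFounded_lt.has_min {c | b < c ∧ f c < f b} ⟨c, hbc, hc⟩
  exact ⟨c₀, hbc₀, hc₀, fun m hbm hmc => not_lt.mp fun hm => hmin m ⟨hbm, hm⟩ hmc⟩

section

variable {n : ℕ} {π : Equiv.Perm (Fin n)}

theorem contains32hat1_iff : Contains32hat1 π ↔
    ∃ a b c : Fin n, (b : ℕ) = a + 1 ∧ b < c ∧ π c < π b ∧ π b < π a := by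
  constructor
  · rintro ⟨i, j, hj, hij, h1, h2⟩
    exact ⟨⟨i, by omega⟩, ⟨i + 1, by omega⟩, ⟨j, hj⟩, rfl, Fin.mk_lt_mk.mpr hij, h1, h2⟩
  · rintro ⟨a, ⟨_, hb⟩, c, rfl, hbc, h1, h2⟩
    exact ⟨a, c, c.isLt, hbc, h1, h2⟩

theorem isSimsun_of_not_contains321 (h : ¬ Contains321 π) : IsSimsun π :=
  fun _ ⟨a, b, c, hab, hbc, _, _, _, _, _, h1, h2⟩ => h ⟨a, b, c, hab, hbc, h1, h2⟩

theorem contains32hat1_of_contains321 (h312 : ¬ Contains312 π) (h : Contains321 π) :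
    Contains32hat1 π := by
  obtain ⟨a, b, c, hab, hbc, hcb, hba⟩ := h
  obtain ⟨i, j, hij, -, hjb, hi, hj⟩ := Fin.exists_adjacent_lt_and_le π hba b hab.le le_rfl
  have hjc : j < c := hjb.trans_lt hbc
  have hcj : π c < π j := by
    refine lt_of_le_of_ne (not_lt.mp fun hjc' => h312 ⟨i, j, c, ?_, hjc, hjc', hcb.trans hi⟩)
      (π.injective.ne hjc.ne')
    exact Fin.lt_def.mpr (by omega)
  exact contains32hat1_iff.mpr ⟨i, j, c, hij, hjc, hcj, hj.trans_lt hi⟩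

theorem not_isSimsun_of_contains32hat1 (h312 : ¬ Contains312 π) (h : Contains32hat1 π) :
    ¬ IsSimsun π := by
  obtain ⟨a, b, c₀, hsucc, hbc₀, hc₀b, hba⟩ := contains32hat1_iff.mp h
  obtain ⟨c, hbc, hcb, hfirst⟩ := exists_first_lt_of_lt π hbc₀ hc₀b
  have hab : a < b := Fin.lt_def.mpr (by omega)
  have hgap : ∀ m, b < m → m < c → π a < π m := fun m hbm hmc =>
    lt_of_le_of_ne (not_lt.mp fun hma =>
        h312 ⟨a, b, m, hab, hbm, (hfirst m hbm hmc).lt_of_ne (π.injective.ne hbm.ne), hma⟩)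
      (π.injective.ne (hab.trans hbm).ne)
  rw [Fin.lt_def] at hcb hba
  intro hs
  refine hs ((π a : ℕ) + 1) ⟨a, b, c, hab, hbc, by omega, by omega, by omega, ?_,
    hgap, hcb, hba⟩
  intro m ham hmb
  rw [Fin.lt_def] at ham hmb
  omega

end

/-- For a 312-avoiding permutation `π`, the following are equivalent:
(i) `π` is simsun; (ii) `π` avoids the pattern 321; (iii) `π` avoids the
generalized pattern 3̂2̂1. -/
theorem simsun_tfae_of_avoids312 (n : ℕ) (π : Equiv.Perm (Fin n))
    (h312 : ¬ Contains312 π) :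
    (IsSimsun π ↔ ¬ Contains321 π) ∧ (IsSimsun π ↔ ¬ Contains32hat1 π) := by
  have hat_of_321 := contains32hat1_of_contains321 h312
  have not_simsun_of_hat := not_isSimsun_of_contains32hat1 h312
  exact ⟨⟨fun hs h => not_simsun_of_hat (hat_of_321 h) hs, isSimsun_of_not_contains321⟩,
    ⟨fun hs h => not_simsun_of_hat h hs, fun h => isSimsun_of_not_contains321 (mt hat_of_321 h)⟩⟩
end

section
/- For every n ≥ 4, the number of simsun permutations of {1,…,n} that avoid both patterns 123 and 132 equals 2. -/
/-- `π` contains the pattern 123. -/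
def Contains123 {n : ℕ} (π : Equiv.Perm (Fin n)) : Prop :=
  ∃ a b c : Fin n, a < b ∧ b < c ∧ π a < π b ∧ π b < π c

/-!
Avoiding 123 and 132 means that every entry has at most one larger entry to its right. Combined
with the simsun condition, applied to the whole word and to the subword of the entries not
exceeding a given one, this forces every entry to exceed all entries at least two places to its
right, and forces ascents and descents to alternate. A permutation with these two properties is
determined by the relative order of its entries, hence by whether it starts with an ascent, and
both phases are realised.
-/

open Function

theorem Equiv.Perm.eq_of_lt_iff_lt {α : Type*} [LinearOrder α] [WellFoundedLT α]
    {π σ : Equiv.Perm α} (h : ∀ a b, π a < π b ↔ σ a < σ b) : π = σ := by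
  have hmono : StrictMono (π ∘ σ.symm) := fun x y hxy => by
    simpa only [comp_apply, h, Equiv.apply_symm_apply] using hxy
  have hid : π ∘ σ.symm = id := (hmono.range_inj strictMono_id).mp <| by
    rw [(π.surjective.comp σ.symm.surjective).range_eq, Set.range_id]
  exact Equiv.ext fun x => by simpa using congrFun hid (σ x)

section Shape

variable {n : ℕ} {α : Type*}

def IsFarDecreasing [Preorder α] (f : Fin n → α) : Prop :=
  ∀ a b : Fin n, a.val + 2 ≤ b.val → f b < f a

def IsAlternating [Preorder α] (f : Fin n → α) (t : ℕ) : Prop :=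
  ∀ a b : Fin n, b.val = a.val + 1 → if (a.val + t) % 2 = 0 then f a < f b else f b < f a

variable [Preorder α] {f : Fin n → α} {t : ℕ}

theorem IsAlternating.lt_iff (hf : IsAlternating f t) {a b : Fin n} (hab : b.val = a.val + 1) :
    f a < f b ↔ (a.val + t) % 2 = 0 := by
  have := hf a b hab
  split_ifs at this with h
  · exact iff_of_true this h
  · exact iff_of_false this.asymm h

theorem IsAlternating.gt_iff (hf : IsAlternating f t) {a b : Fin n} (hab : b.val = a.val + 1) :
    f b < f a ↔ (a.val + t) % 2 ≠ 0 := by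
  have := hf a b hab
  split_ifs at this with h
  · exact iff_of_false this.asymm (not_not.mpr h)
  · exact iff_of_true this h

theorem IsFarDecreasing.injective (hF : IsFarDecreasing f) (hA : IsAlternating f t) :
    Injective f := by
  intro a b hab
  by_contra hne
  obtain h | h | h | h : a.val + 2 ≤ b.val ∨ b.val = a.val + 1 ∨ a.val = b.val + 1 ∨
      b.val + 2 ≤ a.val := by omega
  · exact (hF a b h).ne' hab
  · have := hA a b h
    split_ifs at this
    exacts [this.ne hab, this.ne' hab]
  · have := hA b a h
    split_ifs at this
    exacts [this.ne' hab, this.ne hab]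
  · exact (hF b a h).ne hab

theorem IsFarDecreasing.lt_iff_lt {β : Type*} [Preorder β] {g : Fin n → β}
    (hF : IsFarDecreasing f) (hA : IsAlternating f t) (hG : IsFarDecreasing g)
    (hB : IsAlternating g t) (a b : Fin n) : f a < f b ↔ g a < g b := by
  obtain h | h | rfl | h | h : a.val + 2 ≤ b.val ∨ b.val = a.val + 1 ∨ a = b ∨
      a.val = b.val + 1 ∨ b.val + 2 ≤ a.val := by omega
  · exact iff_of_false (hF a b h).asymm (hG a b h).asymm
  · rw [hA.lt_iff h, hB.lt_iff h]
  · exact iff_of_false (lt_irrefl _) (lt_irrefl _)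
  · rw [hA.gt_iff h, hB.gt_iff h]
  · exact iff_of_true (hF b a h) (hG b a h)

end Shape

section LinearOrder

variable {n : ℕ} {α : Type*} [LinearOrder α] {f : Fin n → α}

theorem isAlternating_of_lt_iff_lt (hf : Injective f)
    (h : ∀ a b c : Fin n, b.val = a.val + 1 → c.val = b.val + 1 → (f a < f b ↔ f c < f b))
    {t : ℕ} (h₀ : ∀ a b : Fin n, a.val = 0 → b.val = 1 → (f a < f b ↔ t % 2 = 0)) :
    IsAlternating f t := by
  have key : ∀ i (a b : Fin n), a.val = i → b.val = i + 1 → (f a < f b ↔ (i + t) % 2 = 0) := by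
    intro i
    induction i with
    | zero => simpa using h₀
    | succ i ih =>
      intro a b ha hb
      obtain ⟨o, ho⟩ : ∃ o : Fin n, o.val = i := ⟨⟨i, by omega⟩, rfl⟩
      rw [← (hf.ne (by omega : a ≠ b)).le_iff_lt, ← not_lt, ← h o a b (by omega) (by omega),
        ih o a ho (by omega)]
      omega
  intro a b hab
  have := key a.val a b rfl hab
  split_ifs with ht
  · exact this.mpr ht
  · exact lt_of_le_of_ne (not_lt.mp (mt this.mp ht)) (hf.ne (by omega))

theorem isAlternating_zero_or_one_of_lt_iff_lt (hf : Injective f)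
    (h : ∀ a b c : Fin n, b.val = a.val + 1 → c.val = b.val + 1 → (f a < f b ↔ f c < f b)) :
    IsAlternating f 0 ∨ IsAlternating f 1 := by
  by_cases h₀ : ∀ a b : Fin n, a.val = 0 → b.val = 1 → f a < f b
  · exact .inl (isAlternating_of_lt_iff_lt hf h fun a b ha hb => iff_of_true (h₀ a b ha hb) rfl)
  · push Not at h₀
    obtain ⟨a₀, b₀, ha₀, hb₀, hle⟩ := h₀
    refine .inr (isAlternating_of_lt_iff_lt hf h fun a b ha hb => ?_)
    rw [show a = a₀ by omega, show b = b₀ by omega]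
    exact iff_of_false (not_lt.mpr hle) (by norm_num)

end LinearOrder

section Zigzag

variable {n t : ℕ}

-- `i ↦ n - 1 - σ i`, where `σ` swaps each `i` with `i + t` even and its right neighbour;
-- truncated subtraction fixes the unpaired positions (`0` for odd `t`, possibly `n - 1`).
def zigzagFun (n t : ℕ) (i : Fin n) : Fin n :=
  ⟨n - 1 - if (i.val + t) % 2 = 0 then i.val + 1 else i.val - 1, by have := i.isLt; omega⟩

theorem isFarDecreasing_zigzagFun : IsFarDecreasing (zigzagFun n t) := by
  intro a b h
  simp only [zigzagFun, Fin.mk_lt_mk]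
  split_ifs <;> omega

theorem isAlternating_zigzagFun : IsAlternating (zigzagFun n t) t := by
  intro a b h
  simp only [zigzagFun, Fin.mk_lt_mk]
  split_ifs <;> omega

noncomputable def zigzag (n t : ℕ) : Equiv.Perm (Fin n) :=
  Equiv.ofBijective (zigzagFun n t) <| Finite.injective_iff_bijective.mp <|
    isFarDecreasing_zigzagFun.injective isAlternating_zigzagFun

theorem zigzag_zero_ne_one (hn : 2 ≤ n) : zigzag n 0 ≠ zigzag n 1 := by
  intro h
  have := congrArg (fun π : Equiv.Perm (Fin n) => (π ⟨0, by omega⟩ : ℕ)) h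
  simp only [zigzag, Equiv.ofBijective_apply, zigzagFun, Nat.zero_mod, Nat.mod_succ, zero_add,
    add_zero, ↓reduceIte, one_ne_zero, zero_tsub, tsub_zero] at this
  omega

end Zigzag

section Pattern

variable {n : ℕ} {π : Equiv.Perm (Fin n)}

theorem IsFarDecreasing.not_contains123 (hF : IsFarDecreasing π) : ¬ Contains123 π := by
  rintro ⟨a, b, c, hab, hbc, hb, hc⟩
  exact (hF a c (by omega)).asymm (hb.trans hc)

theorem IsFarDecreasing.not_contains132 (hF : IsFarDecreasing π) : ¬ Contains132 π := by
  rintro ⟨a, b, c, hab, hbc, hc, -⟩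
  exact (hF a c (by omega)).asymm hc

theorem IsFarDecreasing.isSimsun {t : ℕ} (hF : IsFarDecreasing π) (hA : IsAlternating π t) :
    IsSimsun π := by
  rintro k ⟨a, b, c, hab, hbc, hak, hbk, hck, hgap₁, hgap₂, hcb, hba⟩
  have hc : c.val = b.val + 1 := by
    by_contra
    obtain ⟨m, hm⟩ : ∃ m : Fin n, m.val = b.val + 1 := ⟨⟨b.val + 1, by omega⟩, rfl⟩
    have := hgap₂ m (by omega) (by omega)
    have := hF a m (by omega)
    omega
  have hb := (hA.gt_iff hc).mp (by omega)
  by_cases hb₁ : b.val = a.val + 1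
  · have := (hA.gt_iff hb₁).mp (by omega)
    omega
  · have hb₂ : b.val = a.val + 2 := by
      by_contra
      obtain ⟨q, hq⟩ : ∃ q : Fin n, q.val = a.val + 2 := ⟨⟨a.val + 2, by omega⟩, rfl⟩
      have := hF a q (by omega)
      have := hgap₁ q (by omega) (by omega)
      omega
    obtain ⟨m, hm⟩ : ∃ m : Fin n, m.val = a.val + 1 := ⟨⟨a.val + 1, by omega⟩, rfl⟩
    have := (hA.lt_iff hm).mp (by have := hgap₁ m (by omega) (by omega); omega)
    omega

theorem eq_of_lt_of_lt_of_avoids (h123 : ¬ Contains123 π) (h132 : ¬ Contains132 π)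
    {a b c : Fin n} (hab : a < b) (hac : a < c) (hb : π a < π b) (hc : π a < π c) : b = c := by
  by_contra hne
  have hπ := π.injective.ne hne
  rcases lt_or_gt_of_ne hne with hbc | hcb
  · rcases lt_or_gt_of_ne hπ with h | h
    exacts [h123 ⟨a, b, c, hab, hbc, hb, h⟩, h132 ⟨a, b, c, hab, hbc, hc, h⟩]
  · rcases lt_or_gt_of_ne hπ with h | h
    exacts [h132 ⟨a, c, b, hac, hcb, hb, h⟩, h123 ⟨a, c, b, hac, hcb, hc, h⟩]

theorem IsSimsun.not_descent_descent (hs : IsSimsun π) {a b c : Fin n} (hab : a < b)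
    (hbc : b < c) (hgap : ∀ m, a < m → m < c → m ≠ b → π a < π m) : ¬ (π c < π b ∧ π b < π a) := by
  rintro ⟨hcb, hba⟩
  refine hs (π a + 1) ⟨a, b, c, hab, hbc, by omega, by omega, by omega, fun m h₁ h₂ => ?_,
    fun m h₁ h₂ => ?_, hcb, hba⟩
  · have := hgap m h₁ (h₂.trans hbc) h₂.ne
    omega
  · have := hgap m (hab.trans h₁) h₂ h₁.ne'
    omega

theorem IsSimsun.isFarDecreasing (hn : 4 ≤ n) (hs : IsSimsun π) (h123 : ¬ Contains123 π)
    (h132 : ¬ Contains132 π) : IsFarDecreasing π := by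
  intro a b hab
  by_contra hba
  have hlt : π a < π b := lt_of_le_of_ne (not_lt.mp hba) (π.injective.ne (by omega))
  have hsmall : ∀ m, a < m → m ≠ b → π m < π a := fun m ham hmb =>
    lt_of_le_of_ne (not_lt.mp fun h => hmb (eq_of_lt_of_lt_of_avoids h123 h132 ham
      (by omega) h hlt)) (π.injective.ne ham.ne')
  obtain ⟨p, hp⟩ : ∃ p : Fin n, p.val = a.val + 1 := ⟨⟨a.val + 1, by omega⟩, rfl⟩
  have hpa := hsmall p (by omega) (by omega)
  -- a second entry `q` to the right of `p`, smaller than `π a`: either `p` has the two larger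
  -- entries `q` and `b` to its right, or `a, p, q` is a double descent of the entries `≤ π a`
  have key : ∀ q : Fin n, p < q → q ≠ b → (∀ m, p < m → m < q → m = b) → False := by
    intro q hpq hqb hgap
    have hqa := hsmall q (by omega) hqb
    rcases lt_or_gt_of_ne (π.injective.ne hpq.ne) with h | h
    · exact hqb (eq_of_lt_of_lt_of_avoids h123 h132 hpq (by omega) h (hpa.trans hlt))
    · refine hs.not_descent_descent (by omega) hpq (fun m h₁ h₂ h₃ => ?_) ⟨h, hpa⟩
      rw [hgap m (by omega) h₂]
      exact hlt
  by_cases hb₃ : a.val + 3 ≤ b.val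
  · obtain ⟨q, hq⟩ : ∃ q : Fin n, q.val = a.val + 2 := ⟨⟨a.val + 2, by omega⟩, rfl⟩
    exact key q (by omega) (by omega) fun m _ _ => by omega
  by_cases hn₃ : a.val + 3 < n
  · obtain ⟨q, hq⟩ : ∃ q : Fin n, q.val = a.val + 3 := ⟨⟨a.val + 3, hn₃⟩, rfl⟩
    exact key q (by omega) (by omega) fun m _ _ => by omega
  -- otherwise `b` is the last position and the entry before `a` exists since `n ≥ 4`
  obtain ⟨o, ho⟩ : ∃ o : Fin n, o.val + 1 = a.val := ⟨⟨a.val - 1, by omega⟩, by simp; omega⟩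
  rcases lt_or_gt_of_ne (π.injective.ne (show o ≠ a by omega)) with h | h
  · exact (show a ≠ b by omega) (eq_of_lt_of_lt_of_avoids h123 h132 (by omega) (by omega) h
      (h.trans hlt))
  · exact hs.not_descent_descent (by omega) (by omega) (fun m h₁ h₂ h₃ => by omega) ⟨hpa, h⟩

theorem IsSimsun.lt_iff_lt (hs : IsSimsun π) (h123 : ¬ Contains123 π) {a b c : Fin n}
    (hb : b.val = a.val + 1) (hc : c.val = b.val + 1) : π a < π b ↔ π c < π b := by
  constructor
  · intro hab
    exact lt_of_le_of_ne (not_lt.mp fun hbc => h123 ⟨a, b, c, by omega, by omega, hab, hbc⟩)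
      (π.injective.ne (by omega))
  · intro hcb
    refine lt_of_le_of_ne (not_lt.mp fun hba => ?_) (π.injective.ne (by omega))
    exact hs.not_descent_descent (by omega) (by omega) (fun m _ _ _ => by omega) ⟨hcb, hba⟩

theorem IsSimsun.isAlternating (hs : IsSimsun π) (h123 : ¬ Contains123 π) :
    IsAlternating π 0 ∨ IsAlternating π 1 :=
  isAlternating_zero_or_one_of_lt_iff_lt π.injective fun _ _ _ => hs.lt_iff_lt h123

theorem IsFarDecreasing.eq_zigzag {t : ℕ} (hF : IsFarDecreasing π) (hA : IsAlternating π t) :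
    π = zigzag n t :=
  Equiv.Perm.eq_of_lt_iff_lt (hF.lt_iff_lt hA isFarDecreasing_zigzagFun isAlternating_zigzagFun)

end Pattern

/-- For `n ≥ 4`, there are exactly `2` simsun permutations of `{1, …, n}`
avoiding both 123 and 132. -/
theorem simsun_avoid123_132_count (n : ℕ) (hn : 4 ≤ n) :
    Nat.card {π : Equiv.Perm (Fin n) //
      IsSimsun π ∧ ¬ Contains123 π ∧ ¬ Contains132 π} = 2 := by
  have hmem : ∀ π : Equiv.Perm (Fin n), IsSimsun π ∧ ¬ Contains123 π ∧ ¬ Contains132 π ↔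
      π ∈ ({zigzag n 0, zigzag n 1} : Set (Equiv.Perm (Fin n))) := by
    intro π
    constructor
    · rintro ⟨hs, h123, h132⟩
      have hF := hs.isFarDecreasing hn h123 h132
      rcases hs.isAlternating h123 with hA | hA
      exacts [.inl (hF.eq_zigzag hA), .inr (hF.eq_zigzag hA)]
    · rintro (rfl | rfl) <;>
        exact ⟨isFarDecreasing_zigzagFun.isSimsun isAlternating_zigzagFun,
          isFarDecreasing_zigzagFun.not_contains123, isFarDecreasing_zigzagFun.not_contains132⟩
  rw [Nat.card_congr (Equiv.subtypeEquivRight hmem), Nat.card_coe_set_eq,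
    Set.ncard_pair (zigzag_zero_ne_one (by omega))]
end

section
/- For every n ≥ 3, the number of simsun permutations of {1,…,n} that avoid both patterns 123 and 213 equals 3. -/
namespace Equiv.Perm

variable {n : ℕ}

section InsertMax

/-- The permutation whose one-line notation is that of `ρ` with the new largest value `n`
inserted at position `p`. -/
def insertMax (p : Fin (n + 1)) (ρ : Perm (Fin n)) : Perm (Fin (n + 1)) :=
  (finSuccEquiv' p).trans (ρ.optionCongr.trans finSuccEquivLast.symm)

variable (p : Fin (n + 1)) (ρ : Perm (Fin n))

@[simp] lemma insertMax_apply_self : insertMax p ρ p = Fin.last n := by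
  simp [insertMax]

@[simp] lemma insertMax_apply_succAbove (i : Fin n) :
    insertMax p ρ (p.succAbove i) = (ρ i).castSucc := by
  simp [insertMax]

lemma insertMax_apply_castSucc {i : Fin n} (h : i.castSucc < p) :
    insertMax p ρ i.castSucc = (ρ i).castSucc := by
  rw [← Fin.succAbove_of_castSucc_lt p i h, insertMax_apply_succAbove]

lemma insertMax_apply_succ {i : Fin n} (h : p ≤ i.castSucc) :
    insertMax p ρ i.succ = (ρ i).castSucc := by
  rw [← Fin.succAbove_of_le_castSucc p i h, insertMax_apply_succAbove]

lemma insertMax_apply_lt_last {j : Fin (n + 1)} (h : j ≠ p) : insertMax p ρ j < Fin.last n := by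
  obtain ⟨i, rfl⟩ := Fin.exists_succAbove_eq h
  simp [Fin.castSucc_lt_last]

lemma insertMax_inj {p p' : Fin (n + 1)} {ρ ρ' : Perm (Fin n)}
    (h : insertMax p ρ = insertMax p' ρ') : p = p' ∧ ρ = ρ' := by
  have hp : p = p' := by
    by_contra hne
    have := insertMax_apply_lt_last p' ρ' hne
    rw [← h, insertMax_apply_self] at this
    exact lt_irrefl _ this
  subst hp
  refine ⟨rfl, Equiv.ext fun i => ?_⟩
  simpa using congrArg (· (p.succAbove i)) h

lemma exists_insertMax_eq (π : Perm (Fin (n + 1))) : ∃ p ρ, insertMax p ρ = π := by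
  set p := π.symm (Fin.last n)
  set σ : Perm (Option (Fin n)) := (finSuccEquiv' p).symm.trans (π.trans finSuccEquivLast)
  have hσ : σ none = none := by simp [σ, p]
  refine ⟨p, removeNone σ, Equiv.ext fun j => ?_⟩
  rw [insertMax, map_equiv_removeNone, hσ, swap_self, ← Perm.one_def, one_mul]
  simp [σ]

end InsertMax

def NoTwoSmallerBefore (π : Perm (Fin n)) : Prop :=
  ∀ a b c : Fin n, a < b → b < c → π c < π a ∨ π c < π b

lemma not_contains123_and_not_contains213_iff (π : Perm (Fin n)) :
    ¬ Contains123 π ∧ ¬ Contains213 π ↔ NoTwoSmallerBefore π := by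
  refine ⟨fun ⟨h123, h213⟩ a b c hab hbc => ?_, fun h => ⟨?_, ?_⟩⟩
  · by_contra! hc
    have hac : π a < π c := hc.1.lt_of_ne (π.injective.ne (hab.trans hbc).ne)
    have hbc' : π b < π c := hc.2.lt_of_ne (π.injective.ne hbc.ne)
    rcases (π.injective.ne hab.ne).lt_or_gt with hlt | hlt
    · exact h123 ⟨a, b, c, hab, hbc, hlt, hbc'⟩
    · exact h213 ⟨a, b, c, hab, hbc, hlt, hac⟩
  · rintro ⟨a, b, c, hab, hbc, hab', hbc'⟩
    rcases h a b c hab hbc with h' | h'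
    · exact (hab'.trans hbc').not_gt h'
    · exact hbc'.not_gt h'
  · rintro ⟨a, b, c, hab, hbc, hba, hac⟩
    rcases h a b c hab hbc with h' | h'
    · exact hac.not_gt h'
    · exact (hba.trans hac).not_gt h'

lemma noTwoSmallerBefore_insertMax_iff (p : Fin (n + 1)) (ρ : Perm (Fin n)) :
    NoTwoSmallerBefore (insertMax p ρ) ↔ (p : ℕ) < 2 ∧ NoTwoSmallerBefore ρ := by
  refine ⟨fun h => ⟨?_, fun a b c hab hbc => ?_⟩, fun ⟨hp, h⟩ a b c hab hbc => ?_⟩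
  · by_contra! hp
    have := h ⟨0, by omega⟩ ⟨1, by omega⟩ p (by simp [Fin.lt_def]) (by simp [Fin.lt_def]; omega)
    simp only [insertMax_apply_self] at this
    exact this.elim (Fin.le_last _).not_gt (Fin.le_last _).not_gt
  · have := h _ _ _ ((Fin.strictMono_succAbove p) hab) ((Fin.strictMono_succAbove p) hbc)
    simpa only [insertMax_apply_succAbove, Fin.castSucc_lt_castSucc_iff] using this
  · have hcp : c ≠ p := by rintro rfl; omega
    obtain ⟨c, rfl⟩ := Fin.exists_succAbove_eq hcp
    have hc := insertMax_apply_lt_last p ρ hcp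
    by_cases hap : a = p
    · exact .inl (by rwa [hap, insertMax_apply_self])
    by_cases hbp : b = p
    · exact .inr (by rwa [hbp, insertMax_apply_self])
    obtain ⟨a, rfl⟩ := Fin.exists_succAbove_eq hap
    obtain ⟨b, rfl⟩ := Fin.exists_succAbove_eq hbp
    rw [(Fin.strictMono_succAbove p).lt_iff_lt] at hab hbc
    simpa only [insertMax_apply_succAbove, Fin.castSucc_lt_castSucc_iff] using h a b c hab hbc

def HasDoubleDescentBelow (π : Perm (Fin n)) (k : ℕ) : Prop :=
  ∃ a b c : Fin n, a < b ∧ b < c ∧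
    (π a : ℕ) < k ∧ (π b : ℕ) < k ∧ (π c : ℕ) < k ∧
    (∀ m : Fin n, a < m → m < b → k ≤ (π m : ℕ)) ∧
    (∀ m : Fin n, b < m → m < c → k ≤ (π m : ℕ)) ∧
    (π c : ℕ) < (π b : ℕ) ∧ (π b : ℕ) < (π a : ℕ)

def HasDoubleDescent (π : Perm (Fin n)) : Prop :=
  ∃ a b c : Fin n, a ⋖ b ∧ b ⋖ c ∧ π c < π b ∧ π b < π a

lemma isSimsun_iff (π : Perm (Fin n)) : IsSimsun π ↔ ∀ k, ¬ HasDoubleDescentBelow π k :=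
  Iff.rfl

lemma hasDoubleDescentBelow_iff_of_le (π : Perm (Fin n)) {k : ℕ} (hk : n ≤ k) :
    HasDoubleDescentBelow π k ↔ HasDoubleDescent π := by
  have hlt (m : Fin n) : (π m : ℕ) < k := (π m).isLt.trans_le hk
  constructor
  · rintro ⟨a, b, c, hab, hbc, -, -, -, hgap₁, hgap₂, hcb, hba⟩
    exact ⟨a, b, c, ⟨hab, fun m h₁ h₂ => (hgap₁ m h₁ h₂).not_gt (hlt m)⟩,
      ⟨hbc, fun m h₁ h₂ => (hgap₂ m h₁ h₂).not_gt (hlt m)⟩, hcb, hba⟩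
  · rintro ⟨a, b, c, hab, hbc, hcb, hba⟩
    exact ⟨a, b, c, hab.lt, hbc.lt, hlt a, hlt b, hlt c,
      fun m h₁ h₂ => (hab.2 h₁ h₂).elim, fun m h₁ h₂ => (hbc.2 h₁ h₂).elim, hcb, hba⟩

lemma isSimsun_iff_forall_le (π : Perm (Fin n)) :
    IsSimsun π ↔ ∀ k ≤ n, ¬ HasDoubleDescentBelow π k := by
  refine ⟨fun h k _ => h k, fun h k => ?_⟩
  rcases le_total k n with hk | hk
  · exact h k hk
  · change ¬ HasDoubleDescentBelow π k
    rw [hasDoubleDescentBelow_iff_of_le π hk, ← hasDoubleDescentBelow_iff_of_le π le_rfl]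
    exact h n le_rfl

lemma _root_.IsSimsun.not_hasDoubleDescent_s15 {π : Perm (Fin n)} (h : IsSimsun π) :
    ¬ HasDoubleDescent π := by
  rw [← hasDoubleDescentBelow_iff_of_le π le_rfl]
  exact h n

lemma hasDoubleDescentBelow_insertMax_iff (p : Fin (n + 1)) (ρ : Perm (Fin n)) {k : ℕ}
    (hk : k ≤ n) : HasDoubleDescentBelow (insertMax p ρ) k ↔ HasDoubleDescentBelow ρ k := by
  have hmono := Fin.strictMono_succAbove p
  have hp : ¬ ((insertMax p ρ p : ℕ) < k) := by simpa using hk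
  constructor
  · rintro ⟨a, b, c, hab, hbc, ha, hb, hc, hgap₁, hgap₂, hcb, hba⟩
    obtain ⟨a, rfl⟩ := Fin.exists_succAbove_eq (x := a) (y := p) (by rintro rfl; exact hp ha)
    obtain ⟨b, rfl⟩ := Fin.exists_succAbove_eq (x := b) (y := p) (by rintro rfl; exact hp hb)
    obtain ⟨c, rfl⟩ := Fin.exists_succAbove_eq (x := c) (y := p) (by rintro rfl; exact hp hc)
    simp only [insertMax_apply_succAbove, Fin.val_castSucc, hmono.lt_iff_lt]
      at hab hbc ha hb hc hcb hba
    exact ⟨a, b, c, hab, hbc, ha, hb, hc,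
      fun m h₁ h₂ => by simpa using hgap₁ _ (hmono h₁) (hmono h₂),
      fun m h₁ h₂ => by simpa using hgap₂ _ (hmono h₁) (hmono h₂), hcb, hba⟩
  · rintro ⟨a, b, c, hab, hbc, ha, hb, hc, hgap₁, hgap₂, hcb, hba⟩
    have hgap {x y : Fin n} (hgap : ∀ m, x < m → m < y → k ≤ (ρ m : ℕ)) (m : Fin (n + 1))
        (h₁ : p.succAbove x < m) (h₂ : m < p.succAbove y) : k ≤ (insertMax p ρ m : ℕ) := by
      by_cases hmp : m = p
      · simpa [hmp] using hk
      obtain ⟨m, rfl⟩ := Fin.exists_succAbove_eq hmp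
      simpa using hgap m (hmono.lt_iff_lt.1 h₁) (hmono.lt_iff_lt.1 h₂)
    refine ⟨p.succAbove a, p.succAbove b, p.succAbove c, hmono hab, hmono hbc, ?_, ?_, ?_,
      hgap hgap₁, hgap hgap₂, ?_, ?_⟩ <;> simpa

lemma isSimsun_insertMax_iff (p : Fin (n + 1)) (ρ : Perm (Fin n)) :
    IsSimsun (insertMax p ρ) ↔ IsSimsun ρ ∧ ¬ HasDoubleDescent (insertMax p ρ) := by
  simp only [isSimsun_iff_forall_le, ← hasDoubleDescentBelow_iff_of_le _ (le_refl (n + 1))]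
  constructor
  · intro h
    exact ⟨fun k hk => (hasDoubleDescentBelow_insertMax_iff p ρ hk).not.1 (h k (by omega)),
      h (n + 1) le_rfl⟩
  · rintro ⟨h, htop⟩ k hk
    rcases hk.lt_or_eq with hk | rfl
    · exact (hasDoubleDescentBelow_insertMax_iff p ρ (by omega)).not.2 (h k (by omega))
    · exact htop

@[simp] lemma insertMax_zero_apply_succ (ρ : Perm (Fin n)) (i : Fin n) :
    insertMax 0 ρ i.succ = (ρ i).castSucc :=
  insertMax_apply_succ 0 ρ (Fin.zero_le _)

lemma hasDoubleDescent_insertMax_zero_iff {ρ : Perm (Fin (n + 2))} (hρ : ¬ HasDoubleDescent ρ) :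
    HasDoubleDescent (insertMax 0 ρ) ↔ ρ 1 < ρ 0 := by
  constructor
  · rintro ⟨a, b, c, hab, hbc, hcb, hba⟩
    obtain ⟨b, rfl⟩ := Fin.exists_succ_eq.2 (Fin.ne_zero_of_lt hab.lt)
    obtain ⟨c, rfl⟩ := Fin.exists_succ_eq.2 (Fin.ne_zero_of_lt hbc.lt)
    simp only [Fin.covBy_iff, Nat.covBy_iff_add_one_eq, Fin.val_succ, insertMax_zero_apply_succ,
      Fin.castSucc_lt_castSucc_iff] at hab hbc hcb hba
    rcases Fin.eq_zero_or_eq_succ a with rfl | ⟨a, rfl⟩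
    · obtain rfl : b = 0 := Fin.ext (by simpa using hab)
      obtain rfl : c = 1 := Fin.ext (by simp at hbc ⊢; omega)
      exact hcb
    · exact (hρ ⟨a, b, c, by simpa using hab, by simpa using hbc, hcb, by simpa using hba⟩).elim
  · intro h
    refine ⟨0, 1, 2, by simp [Fin.covBy_iff], by simp [Fin.covBy_iff, Nat.mod_eq_of_lt], ?_, ?_⟩
    · rw [← Fin.succ_zero_eq_one, ← Fin.succ_one_eq_two, insertMax_zero_apply_succ,
        insertMax_zero_apply_succ]
      exact Fin.castSucc_lt_castSucc_iff.2 h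
    · rw [← Fin.succ_zero_eq_one, insertMax_zero_apply_succ, insertMax_apply_self]
      exact Fin.castSucc_lt_last _

lemma insertMax_one_apply_zero (ρ : Perm (Fin (n + 1))) : insertMax 1 ρ 0 = (ρ 0).castSucc :=
  insertMax_apply_castSucc 1 ρ (i := 0) (by simp)

lemma insertMax_one_apply_succ (ρ : Perm (Fin (n + 1))) {i : Fin (n + 1)} (hi : i ≠ 0) :
    insertMax 1 ρ i.succ = (ρ i).castSucc :=
  insertMax_apply_succ 1 ρ (by
    rw [Fin.le_def, Fin.val_castSucc, Fin.val_one]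
    exact Nat.one_le_iff_ne_zero.2 (Fin.val_ne_iff.2 hi))

lemma hasDoubleDescent_insertMax_one_iff {ρ : Perm (Fin (n + 3))} (hρ : ¬ HasDoubleDescent ρ) :
    HasDoubleDescent (insertMax 1 ρ) ↔ ρ 2 < ρ 1 := by
  constructor
  · rintro ⟨a, b, c, hab, hbc, hcb, hba⟩
    obtain ⟨b, rfl⟩ := Fin.exists_succ_eq.2 (Fin.ne_zero_of_lt hab.lt)
    obtain ⟨c, rfl⟩ := Fin.exists_succ_eq.2 (Fin.ne_zero_of_lt hbc.lt)
    rcases Fin.eq_zero_or_eq_succ a with rfl | ⟨a, rfl⟩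
    · obtain rfl : b = 0 := Fin.ext (by simpa [Fin.covBy_iff, eq_comm] using hab)
      rw [insertMax_one_apply_zero, Fin.succ_zero_eq_one, insertMax_apply_self] at hba
      exact absurd hba (Fin.castSucc_lt_last _).not_gt
    simp only [Fin.covBy_iff, Nat.covBy_iff_add_one_eq, Fin.val_succ, add_left_inj] at hab hbc
    have hb : b ≠ 0 := by rintro rfl; simp at hab
    have hc : c ≠ 0 := by rintro rfl; simp at hbc
    rw [insertMax_one_apply_succ ρ hb, insertMax_one_apply_succ ρ hc,
      Fin.castSucc_lt_castSucc_iff] at hcb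
    by_cases ha : a = 0
    · subst ha
      obtain rfl : b = 1 := Fin.ext (by simpa using hab.symm)
      obtain rfl : c = 2 := Fin.ext (by simp at hbc; rw [Fin.val_two]; omega)
      exact hcb
    · rw [insertMax_one_apply_succ ρ ha, insertMax_one_apply_succ ρ hb,
        Fin.castSucc_lt_castSucc_iff] at hba
      exact absurd
        ⟨a, b, c, by simp [Fin.covBy_iff, hab], by simp [Fin.covBy_iff, hbc], hcb, hba⟩ hρ
  · intro h
    refine ⟨1, Fin.succ 1, Fin.succ 2, by simp [Fin.covBy_iff, Nat.mod_eq_of_lt],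
      by simp [Fin.covBy_iff, Nat.mod_eq_of_lt], ?_, ?_⟩
    · rw [insertMax_one_apply_succ ρ one_ne_zero, insertMax_one_apply_succ ρ two_ne_zero]
      exact Fin.castSucc_lt_castSucc_iff.2 h
    · rw [insertMax_one_apply_succ ρ one_ne_zero, insertMax_apply_self]
      exact Fin.castSucc_lt_last _

lemma apply_zero_lt_apply_one_iff {ρ : Perm (Fin (n + 3))} (hs : IsSimsun ρ)
    (hn : NoTwoSmallerBefore ρ) : ρ 0 < ρ 1 ↔ ¬ ρ 1 < ρ 2 := by
  have h01 : (0 : Fin (n + 3)) < 1 := by simp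
  have h12 : (1 : Fin (n + 3)) < 2 := by simp [Fin.lt_def, Nat.mod_eq_of_lt]
  constructor
  · intro h₀₁ h₁₂
    rcases hn 0 1 2 h01 h12 with h | h
    · exact (h₀₁.trans h₁₂).not_gt h
    · exact h₁₂.not_gt h
  · intro h₁₂
    by_contra h₀₁
    refine hs.not_hasDoubleDescent_s15 ⟨0, 1, 2, by simp [Fin.covBy_iff],
      by simp [Fin.covBy_iff, Nat.mod_eq_of_lt], ?_, ?_⟩
    · exact (not_lt.1 h₁₂).lt_of_ne (ρ.injective.ne h12.ne')
    · exact (not_lt.1 h₀₁).lt_of_ne (ρ.injective.ne h01.ne')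

lemma isSimsun_and_noTwoSmallerBefore_insertMax_iff (p : Fin (n + 4)) (ρ : Perm (Fin (n + 3))) :
    IsSimsun (insertMax p ρ) ∧ NoTwoSmallerBefore (insertMax p ρ) ↔
      (IsSimsun ρ ∧ NoTwoSmallerBefore ρ) ∧ (p = 0 ∧ ρ 0 < ρ 1 ∨ p = 1 ∧ ρ 1 < ρ 2) := by
  have asc {i j : Fin (n + 3)} (hij : i ≠ j) : ¬ ρ j < ρ i ↔ ρ i < ρ j :=
    not_lt.trans (ρ.injective.ne hij).le_iff_lt
  rw [isSimsun_insertMax_iff, noTwoSmallerBefore_insertMax_iff]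
  constructor
  · rintro ⟨⟨hs, hd⟩, hp, hn⟩
    refine ⟨⟨hs, hn⟩, ?_⟩
    obtain rfl | rfl : p = 0 ∨ p = 1 := by simp only [Fin.ext_iff, Fin.val_zero, Fin.val_one]; omega
    · rw [hasDoubleDescent_insertMax_zero_iff hs.not_hasDoubleDescent_s15, asc (by simp)] at hd
      exact .inl ⟨rfl, hd⟩
    · rw [hasDoubleDescent_insertMax_one_iff hs.not_hasDoubleDescent_s15,
        asc (by simp [Fin.ext_iff, Nat.mod_eq_of_lt])] at hd
      exact .inr ⟨rfl, hd⟩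
  · rintro ⟨⟨hs, hn⟩, ⟨rfl, h⟩ | ⟨rfl, h⟩⟩
    · refine ⟨⟨hs, ?_⟩, by simp, hn⟩
      rwa [hasDoubleDescent_insertMax_zero_iff hs.not_hasDoubleDescent_s15, asc (by simp)]
    · refine ⟨⟨hs, ?_⟩, by simp, hn⟩
      rwa [hasDoubleDescent_insertMax_one_iff hs.not_hasDoubleDescent_s15,
        asc (by simp [Fin.ext_iff, Nat.mod_eq_of_lt])]

lemma card_isSimsun_and_noTwoSmallerBefore_succ :
    Nat.card {π : Perm (Fin (n + 4)) // IsSimsun π ∧ NoTwoSmallerBefore π} =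
      Nat.card {ρ : Perm (Fin (n + 3)) // IsSimsun ρ ∧ NoTwoSmallerBefore ρ} := by
  have hmem (ρ : {ρ : Perm (Fin (n + 3)) // IsSimsun ρ ∧ NoTwoSmallerBefore ρ}) :
      IsSimsun (insertMax (if ρ.1 0 < ρ.1 1 then 0 else 1) ρ.1) ∧
        NoTwoSmallerBefore (insertMax (if ρ.1 0 < ρ.1 1 then 0 else 1) ρ.1) := by
    rw [isSimsun_and_noTwoSmallerBefore_insertMax_iff]
    refine ⟨ρ.2, ?_⟩
    split_ifs with h
    · exact .inl ⟨rfl, h⟩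
    · exact .inr ⟨rfl, not_not.1 ((apply_zero_lt_apply_one_iff ρ.2.1 ρ.2.2).not.1 h)⟩
  refine (Nat.card_eq_of_bijective (fun ρ => ⟨_, hmem ρ⟩) ⟨fun ρ ρ' h => ?_, fun π => ?_⟩).symm
  · exact Subtype.ext (insertMax_inj (congrArg Subtype.val h)).2
  · obtain ⟨π, hπ⟩ := π
    obtain ⟨p, ρ, rfl⟩ := exists_insertMax_eq π
    obtain ⟨hρ, ⟨rfl, h⟩ | ⟨rfl, h⟩⟩ := (isSimsun_and_noTwoSmallerBefore_insertMax_iff p ρ).1 hπ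
    · exact ⟨⟨ρ, hρ⟩, by simp [h]⟩
    · exact ⟨⟨ρ, hρ⟩, by simp [(apply_zero_lt_apply_one_iff hρ.1 hρ.2).not.2 (not_not.2 h)]⟩

instance (π : Perm (Fin n)) (k : ℕ) : Decidable (HasDoubleDescentBelow π k) := by
  unfold HasDoubleDescentBelow; infer_instance

instance (π : Perm (Fin n)) : Decidable (NoTwoSmallerBefore π) := by
  unfold NoTwoSmallerBefore; infer_instance

lemma card_isSimsun_and_noTwoSmallerBefore_three :
    Nat.card {π : Perm (Fin 3) // IsSimsun π ∧ NoTwoSmallerBefore π} = 3 := by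
  rw [Nat.card_congr (Equiv.subtypeEquivRight fun π => and_congr_left' (isSimsun_iff_forall_le π)),
    Nat.card_eq_fintype_card]
  decide

end Equiv.Perm

open Equiv.Perm in
/-- For `n ≥ 3`, there are exactly `3` simsun permutations of `{1, …, n}`
avoiding both 123 and 213. -/
theorem simsun_avoid123_213_count (n : ℕ) (hn : 3 ≤ n) :
    Nat.card {π : Equiv.Perm (Fin n) //
      IsSimsun π ∧ ¬ Contains123 π ∧ ¬ Contains213 π} = 3 := by
  obtain ⟨n, rfl⟩ : ∃ m, n = m + 3 := ⟨n - 3, by omega⟩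
  simp only [not_contains123_and_not_contains213_iff]
  clear hn
  induction n with
  | zero => exact card_isSimsun_and_noTwoSmallerBefore_three
  | succ n ih => rw [card_isSimsun_and_noTwoSmallerBefore_succ, ih]
end
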